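/- arXiv:2006.15206 — 10 statements merged into one kernel-verified Lean document; each statement's English description precedes it below -/
import Mathlib

section
/- A set K ⊆ [0,1]^d has full m-dimensional projections (i.e., for every m-dimensional affine subspace V of ℝ^d, the orthogonal projection of K onto V equals the projection of [0,1]^d onto V) if and only if K intersects every (d−m)-dimensional affine subspace of ℝ^d that meets [0,1]^d. -/
open Set Module

/-- The unit cube `[0,1]^d`. -/
def unitCube (d : ℕ) : Set (EuclideanSpace ℝ (Fin d)) :=
  {x | ∀ i, x i ∈ Set.Icc (0 : ℝ) 1}

/-- The orthogonal projection of a set `K` onto an affine subspace `V`: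
the set of points `v ∈ V` such that some `x ∈ K` projects to `v`,
i.e. `x - v` is orthogonal to the direction of `V`. -/
def projSet {d : ℕ} (V : AffineSubspace ℝ (EuclideanSpace ℝ (Fin d)))
    (K : Set (EuclideanSpace ℝ (Fin d))) : Set (EuclideanSpace ℝ (Fin d)) :=
  {v | v ∈ V ∧ ∃ x ∈ K, x - v ∈ V.directionᗮ}

/-- A set `K ⊆ [0,1]^d` has full `m`-dimensional projections iff it intersects every
`(d-m)`-dimensional affine subspace meeting `[0,1]^d`. -/
theorem full_projections_iff_intersections (d m : ℕ) (hd : 1 ≤ d) (hm : m ≤ d)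
    (K : Set (EuclideanSpace ℝ (Fin d))) (hK : K ⊆ unitCube d) :
    (∀ V : AffineSubspace ℝ (EuclideanSpace ℝ (Fin d)), V ≠ ⊥ →
        finrank ℝ V.direction = m → projSet V K = projSet V (unitCube d)) ↔
    (∀ W : AffineSubspace ℝ (EuclideanSpace ℝ (Fin d)), W ≠ ⊥ →
        finrank ℝ W.direction = d - m → ((W : Set _) ∩ unitCube d).Nonempty →
        (K ∩ (W : Set _)).Nonempty) := by
  constructor
  · rintro h W hW hdim ⟨p, hpW, hpC⟩
    set V := AffineSubspace.mk' p W.directionᗮ with hVdef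
    have hpV : p ∈ V := AffineSubspace.self_mem_mk' p W.directionᗮ
    have hVne : V ≠ ⊥ := by
      intro hb; rw [hb] at hpV; exact hpV
    have hVdir : V.direction = W.directionᗮ := AffineSubspace.direction_mk' _ _
    have hVrank : finrank ℝ V.direction = m := by
      rw [hVdir]
      have := Submodule.finrank_add_finrank_orthogonal (K := W.direction)
      rw [hdim, finrank_euclideanSpace, Fintype.card_fin] at this
      omega
    have hp' : p ∈ projSet V (unitCube d) := ⟨hpV, p, hpC, by simp⟩
    rw [← h V hVne hVrank] at hp'
    obtain ⟨-, x, hxK, hx⟩ := hp'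
    rw [hVdir, Submodule.orthogonal_orthogonal] at hx
    have hxW : (x - p) +ᵥ p ∈ W :=
      AffineSubspace.vadd_mem_of_mem_direction hx hpW
    rw [vadd_eq_add, sub_add_cancel] at hxW
    exact ⟨x, hxK, hxW⟩
  · intro h V hV hdim
    apply Set.Subset.antisymm
    · rintro v ⟨hvV, x, hxK, hx⟩; exact ⟨hvV, x, hK hxK, hx⟩
    · rintro v ⟨hvV, x, hxC, hx⟩
      set W := AffineSubspace.mk' x V.directionᗮ with hWdef
      have hxW : x ∈ W := AffineSubspace.self_mem_mk' x V.directionᗮ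
      have hWne : W ≠ ⊥ := by
        intro hb; rw [hb] at hxW; exact hxW
      have hWdim : finrank ℝ W.direction = d - m := by
        rw [hWdef, AffineSubspace.direction_mk']
        have := Submodule.finrank_add_finrank_orthogonal (K := V.direction)
        rw [hdim, finrank_euclideanSpace, Fintype.card_fin] at this
        omega
      obtain ⟨y, hyK, hyW⟩ := h W hWne hWdim ⟨x, hxW, hxC⟩
      refine ⟨hvV, y, hyK, ?_⟩
      have hyx : y - x ∈ V.directionᗮ := by
        have := AffineSubspace.vsub_mem_direction hyW hxW
        rwa [AffineSubspace.direction_mk', vsub_eq_sub] at this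
      have heq : y - v = (y - x) + (x - v) := by abel
      rw [heq]; exact Submodule.add_mem _ hyx hx
end

section
/- In the plane, for every n ≥ 1, the number of distinct line traces in the grid C^2_n is at most (2n)^5. -/
open Set

/-- `L` is a line in `ℝ^d`. -/
def IsLine {d : ℕ} (L : Set (Fin d → ℝ)) : Prop :=
  ∃ p v : Fin d → ℝ, v ≠ 0 ∧ L = {x | ∃ c : ℝ, x = p + c • v}

/-- The grid cube `C^d_n(t) = ∏ [t i / n, (t i + 1)/n]`. -/
def gridCube {d : ℕ} (n : ℕ) (t : Fin d → ℤ) : Set (Fin d → ℝ) :=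
  {x | ∀ i, (t i : ℝ) / n ≤ x i ∧ x i ≤ ((t i : ℝ) + 1) / n}

/-- The line trace of `L` in the grid `𝒞^d_n`: the indices `t` (with `0 ≤ t i < n`)
of grid cubes intersected by `L`. -/
def lineTrace {d : ℕ} (n : ℕ) (L : Set (Fin d → ℝ)) : Set (Fin d → ℤ) :=
  {t | (∀ i, 0 ≤ t i ∧ t i < (n : ℤ)) ∧ (gridCube n t ∩ L).Nonempty}

/-- The collection of all line traces in the grid `𝒞^d_n`. -/
def lineTraces (d n : ℕ) : Set (Set (Fin d → ℤ)) :=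
  {S | S.Nonempty ∧ ∃ L : Set (Fin d → ℝ), IsLine L ∧ S = lineTrace n L}

/-!
A hyperplane `a ⬝ᵥ x + c = 0` meets a closed grid cell iff the affine form is `≤ 0` at one corner
of the cell and `≥ 0` at another, so its trace is determined by the signs of the form at the
`(n + 1) ^ d` grid points. Normalising one coefficient of `a` to `1` (one chart per coordinate),
these signs form the sign pattern, at the parameter point, of `(n + 1) ^ d` affine functions of
the `d` remaining parameters.

`N` affine functions on a `d`-dimensional space realise at most `(2 N + 1) ^ d` sign patterns.
Adding a function `f` adds at most twice the number of patterns realised on the zero set of `f`,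
an affine space of smaller dimension: the fibres of the pattern map are convex, so a pattern
realised on both sides of `f = 0` is also realised on it. For lines in the plane this gives
`2 (2 (n + 1) ^ 2 + 1) ^ 2 ≤ (2 n) ^ 5` traces when `n ≥ 2`, and for `n = 1` there is one cell.
-/

open Module Matrix Function

lemma Function.FactorsThrough.range_finite_and_ncard_le {α β γ : Type*} [Nonempty β]
    {F : α → β} {P : α → γ} (h : F.FactorsThrough P) (hP : (range P).Finite) :
    (range F).Finite ∧ (range F).ncard ≤ (range P).ncard := by
  rw [← h.extend_comp fun _ => Classical.arbitrary β, range_comp]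
  exact ⟨hP.image _, ncard_image_le hP⟩

section SignPattern

variable {E : Type*} [AddCommGroup E] [Module ℝ E]

noncomputable def signPattern (l : List (E →ᵃ[ℝ] ℝ)) (x : E) : List SignType :=
  l.map fun f => SignType.sign (f x)

lemma finite_range_signPattern (l : List (E →ᵃ[ℝ] ℝ)) : (range (signPattern l)).Finite :=
  (List.finite_length_eq SignType l.length).subset <| by
    rintro _ ⟨x, rfl⟩
    simp [signPattern]

lemma signPattern_comp {F : Type*} [AddCommGroup F] [Module ℝ F] (l : List (E →ᵃ[ℝ] ℝ))
    (g : F →ᵃ[ℝ] E) (y : F) :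
    signPattern l (g y) = signPattern (l.map fun f => f.comp g) y := by
  simp [signPattern]

lemma convex_setOf_sign_eq (s : SignType) : Convex ℝ {r : ℝ | SignType.sign r = s} := by
  cases s
  · simp [sign_eq_zero_iff, convex_singleton]
  · simpa [sign_eq_neg_one_iff, ← Iio_def] using convex_Iio (0 : ℝ)
  · simpa [sign_eq_one_iff, ← Ioi_def] using convex_Ioi (0 : ℝ)

lemma convex_signPattern_preimage (l : List (E →ᵃ[ℝ] ℝ)) (σ : List SignType) :
    Convex ℝ (signPattern l ⁻¹' {σ}) := by
  induction l generalizing σ with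
  | nil =>
    rw [show signPattern ([] : List (E →ᵃ[ℝ] ℝ)) = fun _ => [] from rfl, preimage_const]
    split_ifs
    exacts [convex_univ, convex_empty]
  | cons f l ih =>
    rcases σ with _ | ⟨s, σ⟩
    · rw [show signPattern (f :: l) ⁻¹' {[]} = ∅ by ext; simp [signPattern]]
      exact convex_empty
    · have : signPattern (f :: l) ⁻¹' {s :: σ} =
          f ⁻¹' {r | SignType.sign r = s} ∩ signPattern l ⁻¹' {σ} := by
        ext
        simp [signPattern]
      rw [this]
      exact ((convex_setOf_sign_eq s).affine_preimage f).inter (ih σ)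

lemma Convex.exists_mem_affineMap_eq_zero {s : Set E} (hs : Convex ℝ s) (f : E →ᵃ[ℝ] ℝ)
    {x y : E} (hx : x ∈ s) (hy : y ∈ s) (hfx : f x ≤ 0) (hfy : 0 ≤ f y) :
    ∃ z ∈ s, f z = 0 := by
  rcases hfx.eq_or_lt with h | h
  · exact ⟨x, hx, h⟩
  have hd : 0 < f y - f x := by linarith
  refine ⟨AffineMap.lineMap x y (-f x / (f y - f x)), hs.lineMap_mem hx hy ⟨?_, ?_⟩, ?_⟩
  · exact div_nonneg (by linarith) hd.le
  · rw [div_le_one hd]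
    linarith
  · rw [AffineMap.apply_lineMap, AffineMap.lineMap_apply_ring']
    field_simp
    ring

lemma signPattern_mem_image_setOf_eq_zero {f : E →ᵃ[ℝ] ℝ} {l : List (E →ᵃ[ℝ] ℝ)} {x y : E}
    (hxy : signPattern l x = signPattern l y) (hx : f x ≤ 0) (hy : 0 ≤ f y) :
    signPattern l x ∈ signPattern l '' {z | f z = 0} := by
  obtain ⟨z, hz, hfz⟩ := Convex.exists_mem_affineMap_eq_zero
    (convex_signPattern_preimage l (signPattern l x)) f rfl hxy.symm hx hy
  exact ⟨z, hfz, hz⟩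

lemma ncard_range_signPattern_cons_le (f : E →ᵃ[ℝ] ℝ) (l : List (E →ᵃ[ℝ] ℝ)) :
    (range (signPattern (f :: l))).ncard ≤
      (range (signPattern l)).ncard + 2 * (signPattern l '' {x | f x = 0}).ncard := by
  set P := signPattern l
  set Z := P '' {x | f x = 0}
  set Sp := P '' {x | 0 < f x}
  set Sm := P '' {x | f x < 0}
  have hP := finite_range_signPattern l
  have hZ : Z.Finite := hP.subset (image_subset_range _ _)
  have hSp : Sp.Finite := hP.subset (image_subset_range _ _)
  have hSm : Sm.Finite := hP.subset (image_subset_range _ _)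
  have hcover : range (signPattern (f :: l)) ⊆
      List.cons 0 '' Z ∪ List.cons 1 '' Sp ∪ List.cons (-1) '' Sm := by
    rintro _ ⟨x, rfl⟩
    rcases lt_trichotomy (f x) 0 with h | h | h
    · exact Or.inr ⟨P x, mem_image_of_mem _ h, by simp [signPattern, P, h]⟩
    · exact Or.inl (Or.inl ⟨P x, mem_image_of_mem _ h, by simp [signPattern, P, h]⟩)
    · exact Or.inl (Or.inr ⟨P x, mem_image_of_mem _ h, by simp [signPattern, P, h]⟩)
  have hsplit : Sp ∩ Sm ⊆ Z := by
    rintro _ ⟨⟨x, hx, rfl⟩, y, hy, hyx⟩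
    exact hyx ▸ signPattern_mem_image_setOf_eq_zero hyx hy.le hx.le
  calc (range (signPattern (f :: l))).ncard
      ≤ (List.cons 0 '' Z ∪ List.cons 1 '' Sp ∪ List.cons (-1) '' Sm).ncard :=
        ncard_le_ncard hcover (((hZ.image _).union (hSp.image _)).union (hSm.image _))
    _ ≤ Z.ncard + Sp.ncard + Sm.ncard := by
        refine (ncard_union_le _ _).trans (add_le_add ((ncard_union_le _ _).trans ?_) ?_) <;>
          simp only [ncard_image_of_injective _ List.cons_injective, le_refl]
    _ = Z.ncard + ((Sp ∪ Sm).ncard + (Sp ∩ Sm).ncard) := by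
        rw [ncard_union_add_ncard_inter _ _ hSp hSm, add_assoc]
    _ ≤ Z.ncard + ((range P).ncard + Z.ncard) := by
        gcongr
        exact union_subset (image_subset_range _ _) (image_subset_range _ _)
    _ = (range P).ncard + 2 * Z.ncard := by ring

lemma ncard_range_signPattern_const_cons (c : ℝ) (l : List (E →ᵃ[ℝ] ℝ)) :
    (range (signPattern (AffineMap.const ℝ E c :: l))).ncard = (range (signPattern l)).ncard := by
  have : signPattern (AffineMap.const ℝ E c :: l) = List.cons (SignType.sign c) ∘ signPattern l :=
    rfl
  rw [this, range_comp, ncard_image_of_injective _ List.cons_injective]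

lemma setOf_eq_zero_subset_range (f : E →ᵃ[ℝ] ℝ) :
    ∃ g : LinearMap.ker f.linear →ᵃ[ℝ] E, {x | f x = 0} ⊆ range g := by
  rcases ({x | f x = 0} : Set E).eq_empty_or_nonempty with h | ⟨x₀, hx₀ : f x₀ = 0⟩
  · exact ⟨AffineMap.const ℝ _ 0, by simp [h]⟩
  refine ⟨(AffineEquiv.vaddConst ℝ x₀).toAffineMap.comp
    (LinearMap.ker f.linear).subtype.toAffineMap, fun x (hx : f x = 0) => ⟨⟨x - x₀, ?_⟩, ?_⟩⟩
  · rw [LinearMap.mem_ker, ← vsub_eq_sub, AffineMap.linearMap_vsub, hx, hx₀, vsub_self]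
  · simp

theorem ncard_range_signPattern_le [FiniteDimensional ℝ E] (l : List (E →ᵃ[ℝ] ℝ)) :
    (range (signPattern l)).ncard ≤ (2 * l.length + 1) ^ finrank ℝ E := by
  induction hd : finrank ℝ E using Nat.strong_induction_on generalizing E with
  | _ d ihd =>
  induction l with
  | nil =>
    calc (range (signPattern ([] : List (E →ᵃ[ℝ] ℝ)))).ncard
        ≤ ({[]} : Set (List SignType)).ncard :=
          ncard_le_ncard (by rintro _ ⟨x, rfl⟩; rfl) (finite_singleton _)
      _ = _ := by simp
  | cons f l ihl =>
    rw [List.length_cons, mul_add, mul_one, add_right_comm]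
    by_cases hf : f.linear = 0
    · obtain ⟨c, rfl⟩ := f.linear_eq_zero_iff_exists_const.1 hf
      rw [ncard_range_signPattern_const_cons]
      exact ihl.trans (Nat.pow_le_pow_left (by omega) d)
    obtain ⟨g, hg⟩ := setOf_eq_zero_subset_range f
    have hK : finrank ℝ (LinearMap.ker f.linear) < d :=
      hd ▸ Submodule.finrank_lt (by rwa [ne_eq, LinearMap.ker_eq_top])
    obtain ⟨k, rfl⟩ : ∃ k, d = k + 1 := ⟨d - 1, by omega⟩
    have hZ : (signPattern l '' {x | f x = 0}).ncard ≤ (2 * l.length + 1) ^ k :=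
      calc (signPattern l '' {x | f x = 0}).ncard
          ≤ (range (signPattern (l.map fun f' => f'.comp g))).ncard := by
            refine ncard_le_ncard ?_ (finite_range_signPattern _)
            rintro _ ⟨x, hx, rfl⟩
            obtain ⟨y, rfl⟩ := hg hx
            exact ⟨y, (signPattern_comp l g y).symm⟩
        _ ≤ (2 * l.length + 1) ^ finrank ℝ (LinearMap.ker f.linear) := by
            simpa using ihd _ hK (l.map fun f' => f'.comp g) rfl
        _ ≤ (2 * l.length + 1) ^ k := Nat.pow_le_pow_right (by omega) (by omega)
    set a := 2 * l.length + 1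
    calc (range (signPattern (f :: l))).ncard
        ≤ a ^ (k + 1) + 2 * a ^ k := (ncard_range_signPattern_cons_le f l).trans (by gcongr)
      _ = a ^ k * (a + 2) := by ring
      _ ≤ (a + 2) ^ k * (a + 2) := by gcongr; omega
      _ = (a + 2) ^ (k + 1) := by ring

end SignPattern

section Grid

variable {d : ℕ}

noncomputable def affineForm (a : Fin d → ℝ) (c : ℝ) : (Fin d → ℝ) →ᵃ[ℝ] ℝ :=
  (dotProductBilin ℝ ℝ a).toAffineMap + AffineMap.const ℝ (Fin d → ℝ) c

@[simp]
lemma affineForm_apply (a : Fin d → ℝ) (c : ℝ) (x : Fin d → ℝ) :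
    affineForm a c x = a ⬝ᵥ x + c :=
  rfl

def hyperplane (a : Fin d → ℝ) (c : ℝ) : Set (Fin d → ℝ) :=
  {x | affineForm a c x = 0}

def cellCorners (t : Fin d → ℤ) : Set (Fin d → ℤ) :=
  {u | ∀ i, u i = t i ∨ u i = t i + 1}

noncomputable def gridPoint (n : ℕ) (u : Fin d → ℤ) : Fin d → ℝ :=
  fun i => u i / n

lemma gridPoint_mem_gridCube {n : ℕ} {t u : Fin d → ℤ} (hu : u ∈ cellCorners t) :
    gridPoint n u ∈ gridCube n t := by
  intro i
  have hn : (0 : ℝ) ≤ n := n.cast_nonneg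
  rcases hu i with h | h <;> simp only [gridPoint, h, Int.cast_add, Int.cast_one]
  · exact ⟨le_rfl, div_le_div_of_nonneg_right (by linarith) hn⟩
  · exact ⟨div_le_div_of_nonneg_right (by linarith) hn, le_rfl⟩

lemma convex_gridCube (n : ℕ) (t : Fin d → ℤ) : Convex ℝ (gridCube n t) := by
  have : gridCube n t = Icc (fun i => (t i : ℝ) / n) (fun i => ((t i : ℝ) + 1) / n) := by
    ext
    simp [gridCube, Pi.le_def, forall_and]
  rw [this]
  exact convex_Icc _ _

lemma exists_cellCorner_dotProduct_le {n : ℕ} {t : Fin d → ℤ} {x : Fin d → ℝ}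
    (hx : x ∈ gridCube n t) (a : Fin d → ℝ) :
    ∃ u ∈ cellCorners t, a ⬝ᵥ gridPoint n u ≤ a ⬝ᵥ x := by
  refine ⟨fun i => if 0 ≤ a i then t i else t i + 1, fun i => by dsimp only; split_ifs <;> simp,
    Finset.sum_le_sum fun i _ => ?_⟩
  simp only [gridPoint]
  split_ifs with h
  · exact mul_le_mul_of_nonneg_left (hx i).1 h
  · push_cast
    exact mul_le_mul_of_nonpos_left (hx i).2 (by linarith)

lemma gridCube_inter_hyperplane_nonempty_iff {n : ℕ} {t : Fin d → ℤ} {a : Fin d → ℝ} {c : ℝ} :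
    (gridCube n t ∩ hyperplane a c).Nonempty ↔
      (∃ u ∈ cellCorners t, affineForm a c (gridPoint n u) ≤ 0) ∧
        ∃ u ∈ cellCorners t, 0 ≤ affineForm a c (gridPoint n u) := by
  constructor
  · rintro ⟨x, hx, hx0 : a ⬝ᵥ x + c = 0⟩
    obtain ⟨u, hu, hle⟩ := exists_cellCorner_dotProduct_le hx a
    obtain ⟨v, hv, hge⟩ := exists_cellCorner_dotProduct_le hx (-a)
    rw [neg_dotProduct, neg_dotProduct, neg_le_neg_iff] at hge
    exact ⟨⟨u, hu, by simp; linarith⟩, v, hv, by simp; linarith⟩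
  · rintro ⟨⟨u, hu, hu0⟩, v, hv, hv0⟩
    exact (convex_gridCube n t).exists_mem_affineMap_eq_zero _ (gridPoint_mem_gridCube hu)
      (gridPoint_mem_gridCube hv) hu0 hv0

noncomputable def gridPoints (d n : ℕ) : Finset (Fin d → ℤ) :=
  Fintype.piFinset fun _ => Finset.Icc 0 (n : ℤ)

lemma card_gridPoints (d n : ℕ) : (gridPoints d n).card = (n + 1) ^ d := by
  simp [gridPoints, Fintype.card_piFinset]

lemma cellCorners_subset_gridPoints {n : ℕ} {t : Fin d → ℤ} (ht : ∀ i, 0 ≤ t i ∧ t i < n) :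
    cellCorners t ⊆ gridPoints d n := by
  intro u hu
  simp only [gridPoints, Finset.mem_coe, Fintype.mem_piFinset, Finset.mem_Icc]
  intro i
  have := ht i
  rcases hu i with h | h <;> omega

lemma lineTrace_hyperplane_eq_of_sign_eq {n : ℕ} {a a' : Fin d → ℝ} {c c' : ℝ}
    (h : ∀ u ∈ gridPoints d n, SignType.sign (affineForm a c (gridPoint n u)) =
      SignType.sign (affineForm a' c' (gridPoint n u))) :
    lineTrace n (hyperplane a c) = lineTrace n (hyperplane a' c') := by
  ext t
  simp only [lineTrace, gridCube_inter_hyperplane_nonempty_iff]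
  refine and_congr_right fun ht => ?_
  have hside : ∀ u ∈ cellCorners t,
      (affineForm a c (gridPoint n u) ≤ 0 ↔ affineForm a' c' (gridPoint n u) ≤ 0) ∧
        (0 ≤ affineForm a c (gridPoint n u) ↔ 0 ≤ affineForm a' c' (gridPoint n u)) :=
    fun u hu => by
      have hs := h u (cellCorners_subset_gridPoints ht hu)
      exact ⟨by rw [← sign_nonpos_iff, hs, sign_nonpos_iff],
        by rw [← sign_nonneg_iff, hs, sign_nonneg_iff]⟩
  exact and_congr (exists_congr fun u => and_congr_right fun hu => (hside u hu).1)
    (exists_congr fun u => and_congr_right fun hu => (hside u hu).2)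

lemma exists_hyperplane_eq_chart {a : Fin d → ℝ} (ha : a ≠ 0) (c : ℝ) :
    ∃ j q, hyperplane a c = hyperplane (update q j 1) (q j) := by
  obtain ⟨j, hj⟩ : ∃ j, a j ≠ 0 := Function.ne_iff.1 ha
  have hscale : update ((a j)⁻¹ • a) j 1 = (a j)⁻¹ • a := by
    rw [update_eq_self_iff, Pi.smul_apply, smul_eq_mul, inv_mul_cancel₀ hj]
  refine ⟨j, update ((a j)⁻¹ • a) j (c / a j), ?_⟩
  ext x
  simp only [hyperplane, mem_ofPred_eq, affineForm_apply, update_idem, update_self, hscale,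
    smul_dotProduct, smul_eq_mul]
  rw [div_eq_inv_mul, ← mul_add, mul_eq_zero, or_iff_right (inv_ne_zero hj)]

lemma affineForm_update_comm (j : Fin d) (q v : Fin d → ℝ) :
    affineForm (update q j 1) (q j) v = affineForm (update v j 1) (v j) q := by
  have key : ∀ w : Fin d → ℝ, update w j 1 = w + Pi.single j (1 - w j) := fun w => by
    ext i
    rcases eq_or_ne i j with rfl | h <;> simp [*]
  simp only [affineForm_apply, key, add_dotProduct, single_dotProduct, dotProduct_comm q v]
  ring

end Grid

def hyperplaneTraces (d n : ℕ) : Set (Set (Fin d → ℤ)) :=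
  {S | ∃ a c, a ≠ 0 ∧ S = lineTrace n (hyperplane a c)}

/-- By `affineForm_update_comm`, `signPattern (chartForms d n j) q` lists the signs of the form
of `hyperplane (update q j 1) (q j)` at the grid points. -/
noncomputable def chartForms (d n : ℕ) (j : Fin d) : List ((Fin d → ℝ) →ᵃ[ℝ] ℝ) :=
  (gridPoints d n).toList.map fun u => affineForm (update (gridPoint n u) j 1) (gridPoint n u j)

lemma lineTrace_chart_factorsThrough (d n : ℕ) (j : Fin d) :
    (fun q => lineTrace n (hyperplane (update q j 1) (q j))).FactorsThrough
      (signPattern (chartForms d n j)) := by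
  intro q q' h
  refine lineTrace_hyperplane_eq_of_sign_eq fun u hu => ?_
  simp only [signPattern, chartForms, List.map_map, List.map_inj_left, Finset.mem_toList,
    Function.comp_apply] at h
  rw [affineForm_update_comm j q, affineForm_update_comm j q']
  exact h u hu

theorem hyperplaneTraces_finite_and_ncard_le (d n : ℕ) :
    (hyperplaneTraces d n).Finite ∧
      (hyperplaneTraces d n).ncard ≤ d * (2 * (n + 1) ^ d + 1) ^ d := by
  set F := fun (j : Fin d) (q : Fin d → ℝ) => lineTrace n (hyperplane (update q j 1) (q j))
  have hsub : hyperplaneTraces d n ⊆ ⋃ j, range (F j) := by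
    rintro _ ⟨a, c, ha, rfl⟩
    obtain ⟨j, q, h⟩ := exists_hyperplane_eq_chart ha c
    exact mem_iUnion.2 ⟨j, q, by rw [h]⟩
  have hchart (j : Fin d) :
      (range (F j)).Finite ∧ (range (F j)).ncard ≤ (2 * (n + 1) ^ d + 1) ^ d := by
    obtain ⟨hfin, hle⟩ := (lineTrace_chart_factorsThrough d n j).range_finite_and_ncard_le
      (finite_range_signPattern _)
    refine ⟨hfin, hle.trans ?_⟩
    simpa [chartForms, card_gridPoints] using ncard_range_signPattern_le (chartForms d n j)
  have hfin : (⋃ j, range (F j)).Finite := finite_iUnion fun j => (hchart j).1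
  refine ⟨hfin.subset hsub, ?_⟩
  calc (hyperplaneTraces d n).ncard
      ≤ (⋃ j, range (F j)).ncard := ncard_le_ncard hsub hfin
    _ ≤ ∑ j, (range (F j)).ncard := ncard_iUnion_le_of_fintype _
    _ ≤ ∑ _j : Fin d, (2 * (n + 1) ^ d + 1) ^ d := Finset.sum_le_sum fun j _ => (hchart j).2
    _ = d * (2 * (n + 1) ^ d + 1) ^ d := by simp

lemma IsLine.exists_hyperplane {L : Set (Fin 2 → ℝ)} (hL : IsLine L) :
    ∃ a c, a ≠ 0 ∧ L = hyperplane a c := by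
  obtain ⟨p, v, hv, rfl⟩ := hL
  refine ⟨![v 1, -v 0], -(![v 1, -v 0] ⬝ᵥ p), fun h => hv ?_, ?_⟩
  · have h0 := congrFun h 0
    have h1 := congrFun h 1
    funext i
    fin_cases i <;> simp_all
  ext x
  simp only [hyperplane, affineForm_apply]
  constructor
  · rintro ⟨s, rfl⟩
    simp [dotProduct, Fin.sum_univ_two]
    ring
  · intro hx
    have hx' : v 1 * (x 0 - p 0) = v 0 * (x 1 - p 1) := by
      simp [dotProduct, Fin.sum_univ_two] at hx
      linarith
    have hvv : v 0 ^ 2 + v 1 ^ 2 ≠ 0 := by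
      simpa [dotProduct, Fin.sum_univ_two, sq] using dotProduct_self_eq_zero.not.2 hv
    refine ⟨((x 0 - p 0) * v 0 + (x 1 - p 1) * v 1) / (v 0 ^ 2 + v 1 ^ 2), ?_⟩
    funext i
    fin_cases i <;> simp <;> field_simp
    · linear_combination (v 1) * hx'
    · linear_combination (-v 0) * hx'

lemma lineTraces_subset_hyperplaneTraces (n : ℕ) : lineTraces 2 n ⊆ hyperplaneTraces 2 n := by
  rintro _ ⟨-, L, hL, rfl⟩
  obtain ⟨a, c, ha, rfl⟩ := hL.exists_hyperplane
  exact ⟨a, c, ha, rfl⟩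

lemma lineTraces_one_subset (d : ℕ) : lineTraces d 1 ⊆ {{0}} := by
  rintro S ⟨hS, L, -, rfl⟩
  refine hS.subset_singleton_iff.1 fun t ht => funext fun i => ?_
  have := ht.1 i
  push_cast at this
  simp only [Pi.zero_apply]
  omega

/-- For `n ≥ 1`, the number of line traces in the planar grid `𝒞^2_n` is at most
`(2n)^5`. -/
theorem card_lineTraces_le_plane (n : ℕ) (hn : 1 ≤ n) :
    (lineTraces 2 n).Finite ∧
      (lineTraces 2 n).ncard ≤ (2 * n) ^ 5 := by
  obtain ⟨hfin, hcard⟩ := hyperplaneTraces_finite_and_ncard_le 2 n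
  have hsub := lineTraces_subset_hyperplaneTraces n
  refine ⟨hfin.subset hsub, ?_⟩
  rcases hn.eq_or_lt with rfl | hn
  · calc (lineTraces 2 1).ncard
        ≤ ({{0}} : Set (Set (Fin 2 → ℤ))).ncard :=
          ncard_le_ncard (lineTraces_one_subset 2) (finite_singleton _)
      _ ≤ (2 * 1) ^ 5 := by simp
  have hpoly : 2 * (2 * (n + 1) ^ 2 + 1) ^ 2 ≤ (2 * n) ^ 5 := by
    obtain ⟨k, rfl⟩ : ∃ k, n = k + 2 := ⟨n - 2, by omega⟩
    ring_nf
    nlinarith [pow_nonneg (Nat.zero_le k) 5]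
  exact (ncard_le_ncard hsub hfin).trans (hcard.trans hpoly)
end

section
/- Let C' be the cube obtained from an axis-parallel cube C by a homothety with center the center of C and ratio (1 − 1/d). Then every line in ℝ^d intersecting C' strongly intersects C. -/
open Set Metric

/-- A line `L` strongly intersects an axis-parallel cube `C` if
`diam^∞(L ∩ C) ≥ diam^∞(C) / (2d)`.  (The metric on `Fin d → ℝ`
is the sup metric, so `Metric.diam` is exactly `diam^∞`.) -/
def StronglyIntersects {d : ℕ} (L C : Set (Fin d → ℝ)) : Prop :=
  Metric.diam C / (2 * d) ≤ Metric.diam (L ∩ C)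

/-- If `C'` is the image of the axis-parallel cube `C` under the homothety with
center the center of `C` and ratio `1 - 1/d`, then every line intersecting `C'`
strongly intersects `C`. -/
theorem stronglyIntersects_of_meets_shrunk_cube {d : ℕ} (hd : 1 ≤ d)
    (a : Fin d → ℝ) (s : ℝ) (hs : 0 < s)
    (C : Set (Fin d → ℝ)) (hC : C = {x | ∀ i, a i ≤ x i ∧ x i ≤ a i + s})
    (o : Fin d → ℝ) (ho : o = fun i => a i + s / 2)
    (C' : Set (Fin d → ℝ))
    (hC' : C' = (fun x => o + (1 - 1 / (d : ℝ)) • (x - o)) '' C)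
    (L : Set (Fin d → ℝ)) (hL : IsLine L) (hmeet : (L ∩ C').Nonempty) :
    StronglyIntersects L C := by
  obtain ⟨p, v, hv, hLeq⟩ := hL
  obtain ⟨q, hqL, hqC'⟩ := hmeet
  have hd1 : (1 : ℝ) ≤ (d : ℝ) := by exact_mod_cast hd
  have hdpos : (0 : ℝ) < (d : ℝ) := by linarith
  set δ : ℝ := s / (2 * d) with hδ
  have hδpos : 0 < δ := by positivity
  set k : ℝ := 1 - 1 / (d : ℝ) with hk
  have hk0 : 0 ≤ k := by
    have h : 1 / (d : ℝ) ≤ 1 := by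
      rw [div_le_one hdpos]; exact hd1
    rw [hk]; linarith
  have h1k : 1 - k = 1 / (d : ℝ) := by rw [hk]; ring
  have hδk : δ = (1 - k) * s / 2 := by
    rw [hδ, h1k]; ring
  -- q is δ-deep inside C
  have hq : ∀ i, a i + δ ≤ q i ∧ q i ≤ a i + s - δ := by
    rw [hC'] at hqC'
    obtain ⟨x, hx, hqx⟩ := hqC'
    rw [hC] at hx
    intro i
    have hxi := hx i
    have hqi : q i = (a i + s / 2) + k * (x i - (a i + s / 2)) := by
      rw [← hqx]; simp [ho, hk]
    constructor
    · have h1 : 0 ≤ k * (x i - a i) := mul_nonneg hk0 (by linarith [hxi.1])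
      rw [hqi, hδk]; ring_nf; ring_nf at h1; linarith
    · have h2 : 0 ≤ k * ((a i + s) - x i) := mul_nonneg hk0 (by linarith [hxi.2])
      rw [hqi, hδk]; ring_nf; ring_nf at h2; linarith
  -- pick coordinate maximizing |v i|
  have hne : (Finset.univ : Finset (Fin d)).Nonempty := ⟨⟨0, hd⟩, Finset.mem_univ _⟩
  obtain ⟨i₀, -, hmax⟩ := Finset.exists_max_image Finset.univ (fun i => |v i|) hne
  have hvi₀ : 0 < |v i₀| := by
    rcases Function.ne_iff.1 hv with ⟨j, hj⟩
    have := hmax j (Finset.mem_univ j)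
    have : 0 < |v j| := abs_pos.2 hj
    linarith [hmax j (Finset.mem_univ j)]
  set t : ℝ := δ / |v i₀| with ht
  have htpos : 0 < t := by positivity
  have htv : ∀ i, |t * v i| ≤ δ := by
    intro i
    rw [abs_mul, abs_of_pos htpos]
    calc t * |v i| ≤ t * |v i₀| := by
          exact mul_le_mul_of_nonneg_left (hmax i (Finset.mem_univ i)) htpos.le
      _ = δ := by rw [ht]; field_simp
  rw [hLeq] at hqL
  obtain ⟨c₀, hc₀⟩ := hqL
  -- the two endpoints
  set x₁ : Fin d → ℝ := q + (-t) • v with hx₁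
  set x₂ : Fin d → ℝ := q + t • v with hx₂
  have hx₁L : x₁ ∈ L := by
    rw [hLeq]; exact ⟨c₀ + (-t), by rw [hx₁, hc₀]; module⟩
  have hx₂L : x₂ ∈ L := by
    rw [hLeq]; exact ⟨c₀ + t, by rw [hx₂, hc₀]; module⟩
  have hx₁C : x₁ ∈ C := by
    rw [hC]; intro i
    have h1 := (abs_le.1 (htv i)).1
    have h2 := (abs_le.1 (htv i)).2
    have hqi := hq i
    simp only [hx₁, Pi.add_apply, Pi.smul_apply, smul_eq_mul]
    constructor <;> nlinarith
  have hx₂C : x₂ ∈ C := by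
    rw [hC]; intro i
    have h1 := (abs_le.1 (htv i)).1
    have h2 := (abs_le.1 (htv i)).2
    have hqi := hq i
    simp only [hx₂, Pi.add_apply, Pi.smul_apply, smul_eq_mul]
    constructor <;> nlinarith
  -- diam C ≤ s
  have hdiamC : Metric.diam C ≤ s := by
    apply Metric.diam_le_of_forall_dist_le hs.le
    intro x hx y hy
    rw [hC] at hx hy
    rw [dist_pi_le_iff hs.le]
    intro i
    rw [Real.dist_eq, abs_le]
    constructor <;> [linarith [(hx i).1, (hy i).2]; linarith [(hx i).2, (hy i).1]]
  have hCbdd : Bornology.IsBounded C := by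
    rw [Metric.isBounded_iff]
    exact ⟨s, fun x hx y hy => by
      rw [hC] at hx hy
      rw [dist_pi_le_iff hs.le]
      intro i
      rw [Real.dist_eq, abs_le]
      constructor <;> [linarith [(hx i).1, (hy i).2]; linarith [(hx i).2, (hy i).1]]⟩
  have hdist : 2 * δ ≤ dist x₁ x₂ := by
    have hcomp := dist_le_pi_dist x₁ x₂ i₀
    have : dist (x₁ i₀) (x₂ i₀) = 2 * δ := by
      simp only [hx₁, hx₂, Pi.add_apply, Pi.smul_apply, smul_eq_mul, Real.dist_eq]
      have : q i₀ + -t * v i₀ - (q i₀ + t * v i₀) = -(2 * t * v i₀) := by ring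
      rw [this, abs_neg, abs_mul, abs_of_pos (by positivity : (0:ℝ) < 2 * t)]
      rw [ht]; field_simp
    linarith
  have hdistdiam : dist x₁ x₂ ≤ Metric.diam (L ∩ C) :=
    Metric.dist_le_diam_of_mem (hCbdd.subset inter_subset_right)
      ⟨hx₁L, hx₁C⟩ ⟨hx₂L, hx₂C⟩
  unfold StronglyIntersects
  have h1 : Metric.diam C / (2 * d) ≤ s / (2 * d) := by
    apply div_le_div_of_nonneg_right hdiamC (by positivity)
  calc Metric.diam C / (2 * d) ≤ s / (2 * d) := h1
    _ = δ := hδ.symm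
    _ ≤ 2 * δ := by linarith
    _ ≤ dist x₁ x₂ := hdist
    _ ≤ Metric.diam (L ∩ C) := hdistdiam
end

section
/- Let d ≥ 2 and k ≥ d/2, and suppose V is a k-dimensional affine subspace of ℝ^d meeting [0,1]^d. Then V intersects at least one of the sets S = {x ∈ [0,1]^d : |{i ≤ d : x_i ∈ [0,1/20] ∪ [19/20,1]}| ≥ k+1} or T = {x ∈ [1/20,19/20]^d : |{i ≤ d : x_i ∈ [8/20,14/20]}| ≤ k}. -/
/-!
Suppose `V` misses `S`. By Krein–Milman, `V ∩ [0,1]^d` has an extreme point `y`; its set `Z`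
of coordinates equal to `0` or `1` determines `V.direction` (a direction vanishing on `Z`
could be added to and subtracted from `y`), so `k ≤ |Z|`. As `y ∉ S`, `|Z| = k` and every other
coordinate of `y` lies in `(1/20, 19/20)`. Restriction to `Z` is then an isomorphism, so some
`u ∈ V.direction` pushes every coordinate in `Z` inward at unit speed. Move along `y + s u`
until `s = 1/20` or another coordinate reaches `1/20` or `19/20`, whichever comes first. In the
first case the endpoint lies in `T` (at most `d - k ≤ k` coordinates can be central), in the
second it lies in `S`.
-/

open Set Module

open Filter Topology

theorem exists_pos_of_eventually_nhds_zero {p : ℝ → Prop} (h : ∀ᶠ t in 𝓝 0, p t) :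
    ∃ t > 0, p t := by
  have hpos : Ioi (0 : ℝ) ∈ 𝓝[>] 0 := self_mem_nhdsWithin
  exact ((h.filter_mono nhdsWithin_le_nhds).and hpos).exists.imp fun _ ht ↦ ⟨ht.2, ht.1⟩

theorem eventually_add_mul_mem_Icc {a b x w : ℝ} (hx : x ∈ Icc a b)
    (hw : w ≠ 0 → x ∈ Ioo a b) : ∀ᶠ t in 𝓝 0, x + t * w ∈ Icc a b := by
  rcases eq_or_ne w 0 with rfl | hw0
  · simp [hx]
  · have hcont : Tendsto (fun t : ℝ ↦ x + t * w) (𝓝 0) (𝓝 x) := by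
      simpa using (show Continuous fun t : ℝ ↦ x + t * w by fun_prop).tendsto 0
    exact (hcont.eventually (Ioo_mem_nhds (hw hw0).1 (hw hw0).2)).mono
      fun _ h ↦ Ioo_subset_Icc_self h

theorem exists_exit_time {ι : Type*} {J : Set ι} (hJ : J.Finite) {a b T : ℝ} (hT : 0 ≤ T)
    {x w : ι → ℝ} (hx : ∀ j ∈ J, x j ∈ Icc a b) :
    ∃ s ∈ Icc 0 T, (∀ j ∈ J, x j + s * w j ∈ Icc a b) ∧
      (s = T ∨ ∃ j ∈ J, x j + s * w j ∉ Ioo a b) := by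
  set A := Icc 0 T ∩ ⋂ j ∈ J, (fun s ↦ x j + s * w j) ⁻¹' Icc a b
  have hA : IsCompact A := isCompact_Icc.inter_right <|
    isClosed_biInter fun j _ ↦ isClosed_Icc.preimage (by fun_prop)
  obtain ⟨s, ⟨hsT, hsJ⟩, hmax⟩ :=
    hA.exists_isGreatest ⟨0, ⟨le_rfl, hT⟩, by simpa using hx⟩
  simp only [mem_iInter, mem_preimage] at hsJ
  refine ⟨s, hsT, hsJ, ?_⟩
  by_contra! h
  have hnear : ∀ᶠ t in 𝓝 0, s + t ≤ T ∧ ∀ j ∈ J, x j + (s + t) * w j ∈ Icc a b := by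
    refine (((continuous_const.add continuous_id).tendsto' 0 s (add_zero s)).eventually
      (ge_mem_nhds (hsT.2.lt_of_ne h.1))).and ?_
    refine hJ.eventually_all.2 fun j hj ↦ ?_
    simpa [add_mul, add_assoc] using eventually_add_mul_mem_Icc (hsJ j hj) fun _ ↦ h.2 j hj
  obtain ⟨t, ht, hsT', hJt⟩ := exists_pos_of_eventually_nhds_zero hnear
  have := hmax ⟨⟨by linarith [hsT.1], hsT'⟩, by simpa using hJt⟩
  linarith

theorem AffineSubspace.add_mem_of_mem_direction {𝕜 E : Type*} [Ring 𝕜] [AddCommGroup E]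
    [Module 𝕜 E] {V : AffineSubspace 𝕜 E} {x v : E} (hx : x ∈ V) (hv : v ∈ V.direction) :
    x + v ∈ V := by
  simpa [vadd_eq_add, add_comm] using V.vadd_mem_of_mem_direction hv hx

section Restrict

variable {𝕜 ι : Type*} [RCLike 𝕜] (W : Submodule 𝕜 (EuclideanSpace 𝕜 ι)) (Z : Set ι)

def Submodule.restrictCoords : W →ₗ[𝕜] (Z → 𝕜) :=
  (LinearMap.pi fun i : Z ↦ EuclideanSpace.projₗ (i : ι)).comp W.subtype

variable {W Z}

theorem Submodule.restrictCoords_injective (h : ∀ w ∈ W, (∀ i ∈ Z, w i = 0) → w = 0) :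
    Function.Injective (W.restrictCoords Z) := by
  rw [← LinearMap.ker_eq_bot, LinearMap.ker_eq_bot']
  exact fun w hw ↦ Subtype.ext (h w w.2 fun i hi ↦ congrFun hw ⟨i, hi⟩)

variable [Fintype ι]

theorem Submodule.finrank_le_ncard (h : ∀ w ∈ W, (∀ i ∈ Z, w i = 0) → w = 0) :
    finrank 𝕜 W ≤ Z.ncard := by
  classical
  have := LinearMap.finrank_le_finrank_of_injective (restrictCoords_injective h)
  rwa [Module.finrank_fintype_fun_eq_card, ← Nat.card_eq_fintype_card] at this

theorem Submodule.exists_mem_eqOn (h : ∀ w ∈ W, (∀ i ∈ Z, w i = 0) → w = 0)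
    (hW : finrank 𝕜 W = Z.ncard) (f : ι → 𝕜) : ∃ u ∈ W, ∀ i ∈ Z, u i = f i := by
  classical
  have hsurj := (LinearMap.injective_iff_surjective_of_finrank_eq_finrank
    (f := W.restrictCoords Z)
    (by rwa [Module.finrank_fintype_fun_eq_card, ← Nat.card_eq_fintype_card])).1
    (restrictCoords_injective h)
  obtain ⟨u, hu⟩ := hsurj fun i ↦ f i
  exact ⟨u, u.2, fun i hi ↦ congrFun hu ⟨i, hi⟩⟩

end Restrict

theorem Set.ncard_add_one_le_of_insert_subset {α : Type*} [Finite α] {Z s : Set α} {j : α}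
    (hj : j ∉ Z) (h : insert j Z ⊆ s) : Z.ncard + 1 ≤ s.ncard :=
  ncard_insert_of_notMem hj ▸ ncard_le_ncard h

section Cube

variable {d k : ℕ}

def tightCoords (x : EuclideanSpace ℝ (Fin d)) : Set (Fin d) := {i | x i = 0 ∨ x i = 1}

def nearBoundaryCoords (x : EuclideanSpace ℝ (Fin d)) : Set (Fin d) :=
  {i | x i ∈ Set.Icc (0 : ℝ) (1 / 20) ∪ Set.Icc (19 / 20 : ℝ) 1}

variable (d k) in
def skeletonNbhd : Set (EuclideanSpace ℝ (Fin d)) :=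
  {x | x ∈ unitCube d ∧ k + 1 ≤ (nearBoundaryCoords x).ncard}

variable (d k) in
def centralRegion : Set (EuclideanSpace ℝ (Fin d)) :=
  {x | (∀ i, x i ∈ Set.Icc (1 / 20 : ℝ) (19 / 20)) ∧
    {i : Fin d | x i ∈ Set.Icc (8 / 20 : ℝ) (14 / 20)}.ncard ≤ k}

variable (d) in
theorem isCompact_unitCube : IsCompact (unitCube d) := by
  have : unitCube d = EuclideanSpace.equiv (Fin d) ℝ ⁻¹' univ.pi fun _ ↦ Icc 0 1 := by
    ext x; simp only [unitCube, mem_ofPred_eq, mem_preimage, mem_univ_pi]; rfl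
  rw [this]
  exact (EuclideanSpace.equiv (Fin d) ℝ).toHomeomorph.isCompact_preimage.2
    (isCompact_univ_pi fun _ ↦ isCompact_Icc)

theorem eq_zero_of_mem_extremePoints {V : AffineSubspace ℝ (EuclideanSpace ℝ (Fin d))}
    {y : EuclideanSpace ℝ (Fin d)} (hy : y ∈ ((V : Set _) ∩ unitCube d).extremePoints ℝ)
    {w : EuclideanSpace ℝ (Fin d)} (hw : w ∈ V.direction) (hwy : ∀ i ∈ tightCoords y, w i = 0) :
    w = 0 := by
  obtain ⟨⟨hyV, hyC⟩, hext⟩ := mem_extremePoints.1 hy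
  have hmove : ∀ v ∈ V.direction, (∀ i ∈ tightCoords y, v i = 0) →
      ∀ᶠ t : ℝ in 𝓝 0, y + t • v ∈ (V : Set _) ∩ unitCube d := by
    intro v hv hvy
    have hcube : ∀ᶠ t : ℝ in 𝓝 0, ∀ i, y i + t * v i ∈ Icc 0 1 := by
      refine eventually_all.2 fun i ↦ eventually_add_mul_mem_Icc (hyC i) fun hvi ↦ ?_
      have hnt : ¬ (y i = 0 ∨ y i = 1) := fun ht ↦ hvi (hvy i ht)
      push Not at hnt
      exact ⟨(hyC i).1.lt_of_ne' hnt.1, (hyC i).2.lt_of_ne hnt.2⟩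
    exact hcube.mono fun t ht ↦
      ⟨V.add_mem_of_mem_direction hyV (V.direction.smul_mem t hv), ht⟩
  obtain ⟨t, ht, hplus, hminus⟩ := exists_pos_of_eventually_nhds_zero
    ((hmove w hw hwy).and (hmove (-w) (V.direction.neg_mem hw) (by simpa using hwy)))
  have := (hext _ hplus _ (by simpa [sub_eq_add_neg] using hminus)
    (mem_openSegment_add_sub (𝕜 := ℝ) y (t • w))).1
  simpa [ht.ne'] using this

theorem exists_vertex_mem_unitCube {V : AffineSubspace ℝ (EuclideanSpace ℝ (Fin d))}
    (hV : ((V : Set _) ∩ unitCube d).Nonempty) :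
    ∃ y ∈ V, y ∈ unitCube d ∧ ∀ w ∈ V.direction, (∀ i ∈ tightCoords y, w i = 0) → w = 0 := by
  obtain ⟨y, hy⟩ :=
    ((isCompact_unitCube d).inter_left V.closed_of_finiteDimensional).extremePoints_nonempty hV
  exact ⟨y, hy.1.1, hy.1.2, fun w hw ↦ eq_zero_of_mem_extremePoints hy hw⟩

theorem tightCoords_subset_nearBoundaryCoords (x : EuclideanSpace ℝ (Fin d)) :
    tightCoords x ⊆ nearBoundaryCoords x := by
  rintro i (h | h) <;> norm_num [nearBoundaryCoords, h]

theorem ncard_tightCoords_eq_and_mem_Ioo {y : EuclideanSpace ℝ (Fin d)} (hy : y ∈ unitCube d)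
    (hnear : (nearBoundaryCoords y).ncard ≤ k) (hk : k ≤ (tightCoords y).ncard) :
    (tightCoords y).ncard = k ∧ ∀ j ∉ tightCoords y, y j ∈ Ioo (1 / 20) (19 / 20) := by
  have hsub := tightCoords_subset_nearBoundaryCoords y
  refine ⟨le_antisymm ((ncard_le_ncard hsub).trans hnear) hk, fun j hj ↦ ?_⟩
  by_contra hjmid
  have hjnear : j ∈ nearBoundaryCoords y := by
    simp only [nearBoundaryCoords, mem_ofPred_eq, mem_union, mem_Icc, mem_Ioo, not_and_or,
      not_lt] at hjmid ⊢
    rcases hjmid with h | h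
    · exact Or.inl ⟨(hy j).1, h⟩
    · exact Or.inr ⟨h, (hy j).2⟩
  have := ncard_add_one_le_of_insert_subset hj (insert_subset hjnear hsub)
  omega

theorem mem_centralRegion_of_coords {z : EuclideanSpace ℝ (Fin d)} {Z : Set (Fin d)}
    (hZ : ∀ i ∈ Z, z i = 1 / 20 ∨ z i = 19 / 20) (hZc : ∀ j ∉ Z, z j ∈ Icc (1 / 20) (19 / 20))
    (hcard : Z.ncard = k) (hk : d ≤ 2 * k) : z ∈ centralRegion d k := by
  refine ⟨fun i ↦ ?_, ?_⟩
  · by_cases hi : i ∈ Z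
    · rcases hZ i hi with h | h <;> norm_num [h]
    · exact hZc i hi
  · have hsub : {i : Fin d | z i ∈ Icc (8 / 20 : ℝ) (14 / 20)} ⊆ Zᶜ := by
      intro i hi hiZ
      rcases hZ i hiZ with h | h <;> norm_num [h] at hi
    have := ncard_le_ncard hsub
    rw [ncard_compl, hcard, Nat.card_eq_fintype_card, Fintype.card_fin] at this
    omega

theorem mem_skeletonNbhd_of_coords {z : EuclideanSpace ℝ (Fin d)} {Z : Set (Fin d)} {s : ℝ}
    (hs : s ∈ Ico 0 (1 / 20)) (hZ : ∀ i ∈ Z, z i = s ∨ z i = 1 - s)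
    (hZc : ∀ j ∉ Z, z j ∈ Icc (1 / 20) (19 / 20)) {j : Fin d} (hj : j ∉ Z)
    (hjz : z j ∉ Ioo (1 / 20) (19 / 20)) (hcard : Z.ncard = k) : z ∈ skeletonNbhd d k := by
  obtain ⟨hs0, hs1⟩ := hs
  refine ⟨fun i ↦ ?_, hcard ▸ ncard_add_one_le_of_insert_subset hj (insert_subset ?_ ?_)⟩
  · by_cases hi : i ∈ Z
    · rcases hZ i hi with h | h <;> rw [h] <;> constructor <;> linarith
    · exact Icc_subset_Icc (by norm_num) (by norm_num) (hZc i hi)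
  · have := hZc j hj
    simp only [nearBoundaryCoords, mem_ofPred_eq, mem_union, mem_Icc, mem_Ioo, not_and_or,
      not_lt] at hjz this ⊢
    rcases hjz with h | h
    · exact Or.inl ⟨by linarith, h⟩
    · exact Or.inr ⟨h, by linarith⟩
  · intro i hi
    rcases hZ i hi with h | h
    · exact Or.inl ⟨h ▸ hs0, h ▸ hs1.le⟩
    · exact Or.inr ⟨by rw [h]; linarith, by rw [h]; linarith⟩

theorem exists_mem_skeletonNbhd_or_centralRegion {V : AffineSubspace ℝ (EuclideanSpace ℝ (Fin d))}
    {y u : EuclideanSpace ℝ (Fin d)} (hyV : y ∈ V) (hu : u ∈ V.direction)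
    (hcard : (tightCoords y).ncard = k) (hk : d ≤ 2 * k)
    (hmid : ∀ j ∉ tightCoords y, y j ∈ Ioo (1 / 20) (19 / 20))
    (huZ : ∀ i ∈ tightCoords y, u i = 1 - 2 * y i) :
    ∃ z ∈ V, z ∈ skeletonNbhd d k ∪ centralRegion d k := by
  obtain ⟨s, hs, hsZc, hexit⟩ := exists_exit_time (tightCoords y)ᶜ.toFinite (T := 1 / 20)
    (by norm_num) (x := y.ofLp) (w := u.ofLp) fun j hj ↦ Ioo_subset_Icc_self (hmid j hj)
  have hz : ∀ i, (y + s • u) i = y i + s * u i := fun i ↦ by simp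
  have hZ : ∀ i ∈ tightCoords y, (y + s • u) i = s ∨ (y + s • u) i = 1 - s := by
    rintro i (h | h)
    · left; rw [hz, huZ i (Or.inl h), h]; ring
    · right; rw [hz, huZ i (Or.inr h), h]; ring
  simp only [← hz] at hsZc hexit
  refine ⟨y + s • u, V.add_mem_of_mem_direction hyV (V.direction.smul_mem s hu), ?_⟩
  rcases hs.2.eq_or_lt with rfl | hlt
  · exact Or.inr (mem_centralRegion_of_coords
      (fun i hi ↦ (hZ i hi).imp_right (·.trans (by norm_num))) hsZc hcard hk)
  · obtain ⟨j, hj, hjz⟩ := hexit.resolve_left hlt.ne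
    exact Or.inl (mem_skeletonNbhd_of_coords ⟨hs.1, hlt⟩ hZ hsZc hj hjz hcard)

end Cube

theorem subspace_intersects_skeleton_or_center_general (d k : ℕ) (hk : d ≤ 2 * k)
    (V : AffineSubspace ℝ (EuclideanSpace ℝ (Fin d)))
    (hdim : finrank ℝ V.direction = k)
    (hmeet : ((V : Set (EuclideanSpace ℝ (Fin d))) ∩ unitCube d).Nonempty) :
    ((V : Set (EuclideanSpace ℝ (Fin d))) ∩
        {x | x ∈ unitCube d ∧
          k + 1 ≤ {i : Fin d |
            x i ∈ Set.Icc (0 : ℝ) (1 / 20) ∪ Set.Icc (19 / 20 : ℝ) 1}.ncard}).Nonempty ∨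
    ((V : Set (EuclideanSpace ℝ (Fin d))) ∩
        {x | (∀ i, x i ∈ Set.Icc (1 / 20 : ℝ) (19 / 20)) ∧
          {i : Fin d | x i ∈ Set.Icc (8 / 20 : ℝ) (14 / 20)}.ncard ≤ k}).Nonempty := by
  change (_ ∩ skeletonNbhd d k).Nonempty ∨ (_ ∩ centralRegion d k).Nonempty
  refine or_iff_not_imp_left.2 fun hS ↦ ?_
  have hnear : ∀ x ∈ V, x ∈ unitCube d → (nearBoundaryCoords x).ncard ≤ k :=
    fun x hxV hx ↦ not_lt.1 fun h ↦ hS ⟨x, hxV, hx, h⟩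
  obtain ⟨y, hyV, hy, hrigid⟩ := exists_vertex_mem_unitCube hmeet
  obtain ⟨hcard, hmid⟩ := ncard_tightCoords_eq_and_mem_Ioo hy (hnear y hyV hy)
    (hdim ▸ V.direction.finrank_le_ncard hrigid)
  obtain ⟨u, hu, huZ⟩ :=
    V.direction.exists_mem_eqOn hrigid (hdim.trans hcard.symm) fun i ↦ 1 - 2 * y i
  obtain ⟨z, hzV, hz | hz⟩ :=
    exists_mem_skeletonNbhd_or_centralRegion hyV hu hcard hk hmid huZ
  · exact absurd ⟨z, hzV, hz⟩ hS
  · exact ⟨z, hzV, hz⟩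

/-- For `k ≥ d/2`, every `k`-dimensional affine subspace meeting `[0,1]^d`
intersects `S` (a neighborhood of the `(d-k-1)`-skeleton) or `T`. -/
theorem subspace_intersects_skeleton_or_center (d k : ℕ) (hd : 2 ≤ d) (hk : d ≤ 2 * k)
    (V : AffineSubspace ℝ (EuclideanSpace ℝ (Fin d))) (hV : V ≠ ⊥)
    (hdim : finrank ℝ V.direction = k)
    (hmeet : ((V : Set (EuclideanSpace ℝ (Fin d))) ∩ unitCube d).Nonempty) :
    ((V : Set (EuclideanSpace ℝ (Fin d))) ∩
        {x | x ∈ unitCube d ∧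
          k + 1 ≤ {i : Fin d |
            x i ∈ Set.Icc (0 : ℝ) (1 / 20) ∪ Set.Icc (19 / 20 : ℝ) 1}.ncard}).Nonempty ∨
    ((V : Set (EuclideanSpace ℝ (Fin d))) ∩
        {x | (∀ i, x i ∈ Set.Icc (1 / 20 : ℝ) (19 / 20)) ∧
          {i : Fin d | x i ∈ Set.Icc (8 / 20 : ℝ) (14 / 20)}.ncard ≤ k}).Nonempty :=
  subspace_intersects_skeleton_or_center_general d k hk V hdim hmeet
end

section
/- If there exists a compact set K ⊆ [0,1]^d intersecting every (d−1)-dimensional affine subspace (hyperplane) that meets [0,1]^d, with the ℓ-fold sumset ℓK nowhere dense in ℝ^d, then there exists a compact set K' ⊆ [0,1]^{d+1} intersecting every d-dimensional affine subspace (hyperplane) that meets [0,1]^{d+1}, with the (ℓ+1)-fold sumset (ℓ+1)K' nowhere dense in ℝ^{d+1}. -/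
open Set Module

/-- The `ℓ`-fold sumset `ℓK = {k₁ + ⋯ + k_ℓ : kᵢ ∈ K}`. -/
def msum {E : Type*} [AddCommMonoid E] (ℓ : ℕ) (K : Set E) : Set E :=
  {x | ∃ f : Fin ℓ → E, (∀ i, f i ∈ K) ∧ ∑ i, f i = x}

/-!
Take a point `p ∈ K` and put `K' = ({0, 1} × K) ∪ ([0, 1] × {p})`, the height coordinate first.
A hyperplane of `ℝ × ℝ^d` is a level set `{t a + g x = c}`. If `c` or `c - a` is a value of `g`
on the cube, then `K`, which meets every hyperplane meeting the cube, has a point `q` with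
`g q = c` or `g q = c - a`, and `(0, q)` or `(1, q)` lies on the hyperplane. Otherwise the values
of `g` on the cube form an interval containing neither endpoint of `[c - a, c]` but meeting it,
so `g p` lies inside it and the segment `[0, 1] × {p}` crosses the hyperplane.

A sum of `ℓ + 1` points of `K'` either has all its summands in `{0, 1} × K`, and then its height
is one of finitely many integers, or has a summand on the segment, and then its horizontal part
lies in `p + ℓK`. Both sets are nowhere dense.
-/

open scoped Pointwise Topology

section Sumset

variable {E F : Type*} [AddCommMonoid E] [AddCommMonoid F]

theorem msum_mono {n : ℕ} {S T : Set E} (h : S ⊆ T) : msum n S ⊆ msum n T := by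
  rintro x ⟨v, hv, rfl⟩
  exact ⟨v, fun i => h (hv i), rfl⟩

theorem msum_image {G : Type*} [FunLike G E F] [AddMonoidHomClass G E F] (φ : G) (n : ℕ)
    (S : Set E) : msum n (φ '' S) = φ '' msum n S := by
  ext y
  constructor
  · rintro ⟨v, hv, rfl⟩
    choose w hwS hwv using hv
    exact ⟨∑ i, w i, ⟨w, hwS, rfl⟩, by simp only [map_sum, hwv]⟩
  · rintro ⟨_, ⟨w, hwS, rfl⟩, rfl⟩
    exact ⟨fun i => φ (w i), fun i => mem_image_of_mem φ (hwS i), (map_sum φ w _).symm⟩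

theorem msum_prod_subset (n : ℕ) (S : Set E) (T : Set F) :
    msum n (S ×ˢ T) ⊆ msum n S ×ˢ msum n T := by
  rintro _ ⟨v, hv, rfl⟩
  exact ⟨⟨fun i => (v i).1, fun i => (hv i).1, (Prod.fst_sum ..).symm⟩,
    ⟨fun i => (v i).2, fun i => (hv i).2, (Prod.snd_sum ..).symm⟩⟩

theorem finite_msum {S : Set E} (hS : S.Finite) (n : ℕ) : (msum n S).Finite := by
  have : msum n S = (fun v : Fin n → E => ∑ i, v i) '' univ.pi fun _ => S := by
    ext x; simp [msum]
  rw [this]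
  exact (Set.Finite.pi fun _ => hS).image _

theorem msum_succ_union_subset (n : ℕ) (S T : Set E) :
    msum (n + 1) (S ∪ T) ⊆ msum (n + 1) S ∪ (T + msum n (S ∪ T)) := by
  rintro _ ⟨v, hv, rfl⟩
  by_cases hS : ∀ i, v i ∈ S
  · exact Or.inl ⟨v, hS, rfl⟩
  · obtain ⟨i, hi⟩ := not_forall.mp hS
    refine Or.inr ⟨v i, (hv i).resolve_left hi, _, ⟨_, fun j => hv (i.succAbove j), rfl⟩, ?_⟩
    exact (Fin.sum_univ_succAbove v i).symm

end Sumset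

section NowhereDense

variable {X Y : Type*} [TopologicalSpace X] [TopologicalSpace Y]

theorem IsNowhereDense.union {s t : Set X} (hs : IsNowhereDense s) (ht : IsNowhereDense t) :
    IsNowhereDense (s ∪ t) := by
  rw [IsNowhereDense, closure_union, interior_union_isClosed_of_interior_empty isClosed_closure ht,
    hs]

theorem IsNowhereDense.prod_of_left {s : Set X} (hs : IsNowhereDense s) (t : Set Y) :
    IsNowhereDense (s ×ˢ t) := by
  rw [IsNowhereDense, closure_prod_eq, interior_prod_eq, hs, empty_prod]

theorem IsNowhereDense.prod_of_right (s : Set X) {t : Set Y} (ht : IsNowhereDense t) :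
    IsNowhereDense (s ×ˢ t) := by
  rw [IsNowhereDense, closure_prod_eq, interior_prod_eq, ht, prod_empty]

theorem Set.Finite.isNowhereDense [T1Space X] [∀ x : X, Filter.NeBot (𝓝[≠] x)] {s : Set X}
    (hs : s.Finite) : IsNowhereDense s := by
  rw [hs.isClosed.isNowhereDense_iff, interior_eq_empty_iff_dense_compl, compl_eq_univ_sdiff]
  exact dense_univ.sdiff_finite hs

end NowhereDense

section LevelSets

variable {𝕜 E F : Type*} [Field 𝕜] [AddCommGroup E] [Module 𝕜 E] [AddCommGroup F] [Module 𝕜 F]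

variable (𝕜) in
/-- For `f ≠ 0` the level sets of `f` are the affine hyperplanes; `f = 0` only asks that `K` be
nonempty when `C` is. -/
def MeetsLevelSets (K C : Set E) : Prop :=
  ∀ f : Dual 𝕜 E, f '' C ⊆ f '' K

theorem MeetsLevelSets.image {G : Type*} [FunLike G E F] [LinearMapClass G 𝕜 E F] {K C : Set E}
    (h : MeetsLevelSets 𝕜 K C) (φ : G) : MeetsLevelSets 𝕜 (φ '' K) (φ '' C) := by
  intro f
  rw [image_image, image_image]
  exact h (f ∘ₗ (φ : E →ₗ[𝕜] F))

theorem Submodule.exists_le_finrank_eq (U : Submodule 𝕜 E) {k : ℕ} (hk : k ≤ finrank 𝕜 U) :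
    ∃ W ≤ U, finrank 𝕜 W = k := by
  obtain ⟨v, hv⟩ := exists_linearIndependent_of_le_finrank hk
  refine ⟨(span 𝕜 (range v)).map U.subtype, map_subtype_le _ _, ?_⟩
  rw [finrank_map_subtype_eq, finrank_span_eq_card hv, Fintype.card_fin]

theorem LinearMap.finrank_sub_one_le_finrank_ker [FiniteDimensional 𝕜 E] (f : Dual 𝕜 E) :
    finrank 𝕜 E - 1 ≤ finrank 𝕜 (LinearMap.ker f) := by
  have := f.finrank_range_add_finrank_ker
  have := (range f).finrank_le
  rw [finrank_self] at this
  omega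

theorem meetsLevelSets_of_forall_affineSubspace [FiniteDimensional 𝕜 E] {K C : Set E}
    (h : ∀ V : AffineSubspace 𝕜 E, V ≠ ⊥ → finrank 𝕜 V.direction = finrank 𝕜 E - 1 →
      ((V : Set E) ∩ C).Nonempty → (K ∩ V).Nonempty) :
    MeetsLevelSets 𝕜 K C := by
  rintro f _ ⟨x, hx, rfl⟩
  obtain ⟨W, hWf, hW⟩ := (LinearMap.ker f).exists_le_finrank_eq f.finrank_sub_one_le_finrank_ker
  obtain ⟨q, hqK, hqV⟩ := h (AffineSubspace.mk' x W)
    ((AffineSubspace.nonempty_iff_ne_bot _).mp ⟨x, AffineSubspace.self_mem_mk' x W⟩)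
    (by rw [AffineSubspace.direction_mk', hW]) ⟨x, AffineSubspace.self_mem_mk' x W, hx⟩
  have hq : q - x ∈ LinearMap.ker f := hWf (AffineSubspace.mem_mk'.mp hqV)
  rw [LinearMap.mem_ker, map_sub, sub_eq_zero] at hq
  exact ⟨q, hqK, hq⟩

theorem MeetsLevelSets.inter_nonempty [FiniteDimensional 𝕜 E] {K C : Set E}
    (h : MeetsLevelSets 𝕜 K C) {V : AffineSubspace 𝕜 E}
    (hV : finrank 𝕜 V.direction + 1 = finrank 𝕜 E) (hVC : ((V : Set E) ∩ C).Nonempty) :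
    (K ∩ V).Nonempty := by
  obtain ⟨z, hzV, hzC⟩ := hVC
  obtain ⟨f, hf, hle⟩ := V.direction.exists_le_ker_of_lt_top
    (Submodule.lt_top_of_finrank_lt_finrank (by omega))
  have hker : V.direction = LinearMap.ker f := by
    refine Submodule.eq_of_le_of_finrank_le hle ?_
    have := Submodule.finrank_lt (mt LinearMap.ker_eq_top.mp hf)
    omega
  obtain ⟨q, hqK, hq⟩ := h f ⟨z, hzC, rfl⟩
  refine ⟨q, hqK, (AffineSubspace.vsub_right_mem_direction_iff_mem hzV q).mp ?_⟩
  rw [hker, LinearMap.mem_ker, vsub_eq_sub, map_sub, hq, sub_self]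

end LevelSets

theorem Set.OrdConnected.subset_Icc {α : Type*} [LinearOrder α] {J : Set α}
    (hJ : J.OrdConnected) {a b w : α} (hw : w ∈ J) (hwab : w ∈ Icc a b) (ha : a ∉ J)
    (hb : b ∉ J) : J ⊆ Icc a b := by
  intro y hy
  by_contra hy'
  rcases not_and_or.mp hy' with h | h
  · exact ha (hJ.out hy hw ⟨(not_le.mp h).le, hwab.1⟩)
  · exact hb (hJ.out hw hy ⟨hwab.2, (not_le.mp h).le⟩)

theorem Set.OrdConnected.subset_uIcc {α : Type*} [LinearOrder α] {J : Set α}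
    (hJ : J.OrdConnected) {a b w : α} (hw : w ∈ J) (hwab : w ∈ uIcc a b) (ha : a ∉ J)
    (hb : b ∉ J) : J ⊆ uIcc a b :=
  hJ.subset_Icc hw hwab (by rcases min_choice a b with h | h <;> rwa [h])
    (by rcases max_choice a b with h | h <;> rwa [h])

section StepUp

variable {E : Type*}

def stepUp (K : Set E) (p : E) : Set (ℝ × E) := {0, 1} ×ˢ K ∪ Icc 0 1 ×ˢ {p}

theorem isCompact_stepUp [TopologicalSpace E] {K : Set E} (hK : IsCompact K) (p : E) :
    IsCompact (stepUp K p) :=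
  ((toFinite {0, 1}).isCompact.prod hK).union (isCompact_Icc.prod isCompact_singleton)

theorem stepUp_subset {K C : Set E} (hKC : K ⊆ C) {p : E} (hp : p ∈ K) :
    stepUp K p ⊆ Icc 0 1 ×ˢ C := by
  rintro _ (⟨ht, hx⟩ | ⟨ht, hx⟩)
  · exact ⟨pair_subset (left_mem_Icc.2 zero_le_one) (right_mem_Icc.2 zero_le_one) ht, hKC hx⟩
  · exact ⟨ht, hKC (mem_singleton_iff.mp hx ▸ hp)⟩

theorem meetsLevelSets_stepUp [NormedAddCommGroup E] [NormedSpace ℝ E] [FiniteDimensional ℝ E]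
    {K C : Set E} (hC : IsPreconnected C) (hKC : K ⊆ C) (hK : MeetsLevelSets ℝ K C)
    {p : E} (hp : p ∈ K) : MeetsLevelSets ℝ (stepUp K p) (Icc 0 1 ×ˢ C) := by
  rintro f _ ⟨⟨t₀, x₀⟩, ⟨ht₀, hx₀⟩, rfl⟩
  set g : Dual ℝ E := f ∘ₗ LinearMap.inr ℝ ℝ E
  set a := f (1, 0)
  have hf : ∀ t x, f (t, x) = t * a + g x := fun t x => by
    rw [show ((t, x) : ℝ × E) = t • (1, 0) + (0, x) by simp, map_add, map_smul, smul_eq_mul]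
    rfl
  set c := f (t₀, x₀)
  have hc : c = t₀ * a + g x₀ := hf t₀ x₀
  by_cases hc₀ : c ∈ g '' C
  · obtain ⟨q, hq, hqc⟩ := hK g hc₀
    exact ⟨(0, q), Or.inl ⟨by simp, hq⟩, by rw [hf, hqc, zero_mul, zero_add]⟩
  by_cases hc₁ : c - a ∈ g '' C
  · obtain ⟨q, hq, hqc⟩ := hK g hc₁
    exact ⟨(1, q), Or.inl ⟨by simp, hq⟩, by rw [hf, hqc, one_mul, add_sub_cancel]⟩
  have hJ : g '' C ⊆ segment ℝ c (c - a) := by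
    rw [segment_eq_uIcc]
    refine (hC.image g g.continuous_of_finiteDimensional.continuousOn).ordConnected.subset_uIcc
      ⟨x₀, hx₀, rfl⟩ ?_ hc₀ hc₁
    rw [← segment_eq_uIcc, segment_eq_image']
    exact ⟨t₀, ht₀, by simp only [smul_eq_mul, hc]; ring⟩
  rw [segment_eq_image'] at hJ
  obtain ⟨θ, hθ, hθp⟩ := hJ ⟨p, hKC hp, rfl⟩
  exact ⟨(θ, p), Or.inr ⟨hθ, rfl⟩, by rw [hf, ← hθp]; ring⟩

theorem isNowhereDense_msum_stepUp [TopologicalSpace E] [AddCommGroup E]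
    [IsTopologicalAddGroup E] {K : Set E} {p : E} (hp : p ∈ K) {ℓ : ℕ}
    (hK : IsNowhereDense (msum ℓ K)) :
    IsNowhereDense (msum (ℓ + 1) (stepUp K p)) := by
  have hsub : stepUp K p ⊆ univ ×ˢ K := by
    rintro _ (⟨-, hx⟩ | ⟨-, hx⟩)
    · exact ⟨trivial, hx⟩
    · exact ⟨trivial, mem_singleton_iff.mp hx ▸ hp⟩
  have hcover : msum (ℓ + 1) (stepUp K p) ⊆
      msum (ℓ + 1) {0, 1} ×ˢ univ ∪ univ ×ˢ ({p} + msum ℓ K) := by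
    refine (msum_succ_union_subset ℓ _ _).trans (union_subset_union ?_ ?_)
    · exact (msum_prod_subset _ _ _).trans (prod_mono subset_rfl (subset_univ _))
    · calc (Icc 0 1 ×ˢ {p} : Set (ℝ × E)) + msum ℓ (stepUp K p)
          ⊆ Icc 0 1 ×ˢ {p} + msum ℓ univ ×ˢ msum ℓ K :=
            add_subset_add_left ((msum_mono hsub).trans (msum_prod_subset _ _ _))
        _ ⊆ univ ×ˢ ({p} + msum ℓ K) := by
            rw [prod_add_prod_comm]; exact prod_mono (subset_univ _) subset_rfl
  refine IsNowhereDense.mono hcover (IsNowhereDense.union ?_ ?_)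
  · exact ((finite_msum (toFinite {0, 1}) _).isNowhereDense).prod_of_left univ
  · rw [singleton_add]
    exact IsNowhereDense.prod_of_right univ
      ((Homeomorph.addLeft p).isInducing.isNowhereDense_image hK)

end StepUp

theorem zero_mem_unitCube (d : ℕ) : (0 : EuclideanSpace ℝ (Fin d)) ∈ unitCube d :=
  fun _ => ⟨le_rfl, zero_le_one⟩

theorem convex_unitCube (d : ℕ) : Convex ℝ (unitCube d) := by
  intro x hx y hy a b ha hb hab i
  simpa using convex_Icc (0 : ℝ) 1 (hx i) (hy i) ha hb hab

noncomputable def consEquiv (d : ℕ) :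
    (ℝ × EuclideanSpace ℝ (Fin d)) ≃L[ℝ] EuclideanSpace ℝ (Fin (d + 1)) :=
  ((ContinuousLinearEquiv.refl ℝ ℝ).prodCongr (EuclideanSpace.equiv (Fin d) ℝ)).trans
    ((Fin.consEquivL ℝ fun _ => ℝ).trans (EuclideanSpace.equiv (Fin (d + 1)) ℝ).symm)

theorem consEquiv_apply (d : ℕ) (t : ℝ) (x : EuclideanSpace ℝ (Fin d)) (i : Fin (d + 1)) :
    consEquiv d (t, x) i = (Fin.cons t (fun j => x j) : Fin (d + 1) → ℝ) i := rfl

theorem consEquiv_image_unitCube (d : ℕ) :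
    consEquiv d '' (Icc 0 1 ×ˢ unitCube d) = unitCube (d + 1) := by
  ext y
  constructor
  · rintro ⟨⟨t, x⟩, ⟨ht, hx⟩, rfl⟩ i
    rw [consEquiv_apply]
    exact Fin.cases ht hx i
  · intro hy
    refine ⟨(y 0, WithLp.toLp 2 fun j => y j.succ), ⟨hy 0, fun j => hy j.succ⟩, ?_⟩
    ext i
    rw [consEquiv_apply]
    exact Fin.cases rfl (fun _ => rfl) i

theorem step_up_dimension_general (d ℓ : ℕ)
    (h : ∃ K : Set (EuclideanSpace ℝ (Fin d)),
      IsCompact K ∧ K ⊆ unitCube d ∧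
      (∀ V : AffineSubspace ℝ (EuclideanSpace ℝ (Fin d)), V ≠ ⊥ →
        finrank ℝ V.direction = d - 1 →
        ((V : Set _) ∩ unitCube d).Nonempty → (K ∩ (V : Set _)).Nonempty) ∧
      IsNowhereDense (msum ℓ K)) :
    ∃ K' : Set (EuclideanSpace ℝ (Fin (d + 1))),
      IsCompact K' ∧ K' ⊆ unitCube (d + 1) ∧
      (∀ V : AffineSubspace ℝ (EuclideanSpace ℝ (Fin (d + 1))), V ≠ ⊥ →
        finrank ℝ V.direction = d →
        ((V : Set _) ∩ unitCube (d + 1)).Nonempty → (K' ∩ (V : Set _)).Nonempty) ∧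
      IsNowhereDense (msum (ℓ + 1) K') := by
  obtain ⟨K, hK, hKC, hKV, hKℓ⟩ := h
  have hKlev : MeetsLevelSets ℝ K (unitCube d) :=
    meetsLevelSets_of_forall_affineSubspace (by simpa only [finrank_euclideanSpace_fin] using hKV)
  obtain ⟨p, hp, -⟩ := hKlev 0 ⟨0, zero_mem_unitCube d, rfl⟩
  have hK'lev := (meetsLevelSets_stepUp (convex_unitCube d).isPreconnected hKC hKlev hp).image
    (consEquiv d)
  rw [consEquiv_image_unitCube] at hK'lev
  refine ⟨consEquiv d '' stepUp K p, (isCompact_stepUp hK p).image (consEquiv d).continuous,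
    ?_, fun V _ hV hVC => hK'lev.inter_nonempty (by rw [hV, finrank_euclideanSpace_fin]) hVC, ?_⟩
  · rw [← consEquiv_image_unitCube]
    exact image_mono (stepUp_subset hKC hp)
  · rw [msum_image]
    exact (consEquiv d).toHomeomorph.isInducing.isNowhereDense_image
      (isNowhereDense_msum_stepUp hp hKℓ)

/-- If there is a compact `K ⊆ [0,1]^d` meeting every hyperplane that meets the cube
with `ℓK` nowhere dense, then there is a compact `K' ⊆ [0,1]^{d+1}` meeting every
hyperplane that meets the cube with `(ℓ+1)K'` nowhere dense. -/
theorem step_up_dimension (d ℓ : ℕ) (hd : 2 ≤ d) (hℓ : 2 ≤ ℓ)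
    (h : ∃ K : Set (EuclideanSpace ℝ (Fin d)),
      IsCompact K ∧ K ⊆ unitCube d ∧
      (∀ V : AffineSubspace ℝ (EuclideanSpace ℝ (Fin d)), V ≠ ⊥ →
        finrank ℝ V.direction = d - 1 →
        ((V : Set _) ∩ unitCube d).Nonempty → (K ∩ (V : Set _)).Nonempty) ∧
      IsNowhereDense (msum ℓ K)) :
    ∃ K' : Set (EuclideanSpace ℝ (Fin (d + 1))),
      IsCompact K' ∧ K' ⊆ unitCube (d + 1) ∧
      (∀ V : AffineSubspace ℝ (EuclideanSpace ℝ (Fin (d + 1))), V ≠ ⊥ →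
        finrank ℝ V.direction = d →
        ((V : Set _) ∩ unitCube (d + 1)).Nonempty → (K' ∩ (V : Set _)).Nonempty) ∧
      IsNowhereDense (msum (ℓ + 1) K') :=
  step_up_dimension_general d ℓ h
end

section
/- If K ⊆ [0,1]^d is a compact set intersecting every k-dimensional affine subspace meeting [0,1]^d, and the ℓ-fold sumset ℓK is nowhere dense in ℝ^d, then K × [0,1] ⊆ [0,1]^{d+1} is compact, intersects every (k+1)-dimensional affine subspace meeting [0,1]^{d+1}, and the ℓ-fold sumset ℓ(K × [0,1]) is nowhere dense in ℝ^{d+1}. -/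
open Set Module

/-- The unit cube `[0,1]^{d+1}` viewed inside `ℝ^d × ℝ`. -/
def unitCube' (d : ℕ) : Set (EuclideanSpace ℝ (Fin d) × ℝ) :=
  {p | p.1 ∈ unitCube d ∧ p.2 ∈ Set.Icc (0 : ℝ) 1}

lemma msum_prod {E F : Type*} [AddCommMonoid E] [AddCommMonoid F] (ℓ : ℕ)
    (A : Set E) (B : Set F) : msum ℓ (A ×ˢ B) = (msum ℓ A) ×ˢ (msum ℓ B) := by
  ext x
  constructor
  · rintro ⟨f, hf, rfl⟩
    exact ⟨⟨fun i => (f i).1, fun i => (hf i).1, Prod.fst_sum.symm⟩,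
           ⟨fun i => (f i).2, fun i => (hf i).2, Prod.snd_sum.symm⟩⟩
  · rintro ⟨⟨f, hf, hfs⟩, ⟨g, hg, hgs⟩⟩
    refine ⟨fun i => (f i, g i), fun i => ⟨hf i, hg i⟩, ?_⟩
    exact Prod.ext (by simpa [Prod.fst_sum] using hfs) (by simpa [Prod.snd_sum] using hgs)

/-- If `K` is an `(ℓ,k,d)`-set, then `K × [0,1]` is an `(ℓ,k+1,d+1)`-set. -/
theorem prod_with_interval (d k ℓ : ℕ) (hd : 2 ≤ d) (hk : k < d) (hℓ : 2 ≤ ℓ)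
    (K : Set (EuclideanSpace ℝ (Fin d))) (hcpt : IsCompact K) (hsub : K ⊆ unitCube d)
    (hhit : ∀ V : AffineSubspace ℝ (EuclideanSpace ℝ (Fin d)), V ≠ ⊥ →
      finrank ℝ V.direction = k →
      ((V : Set _) ∩ unitCube d).Nonempty → (K ∩ (V : Set _)).Nonempty)
    (hnwd : IsNowhereDense (msum ℓ K)) :
    IsCompact (K ×ˢ Set.Icc (0 : ℝ) 1) ∧
    (K ×ˢ Set.Icc (0 : ℝ) 1) ⊆ unitCube' d ∧
    (∀ V : AffineSubspace ℝ (EuclideanSpace ℝ (Fin d) × ℝ), V ≠ ⊥ →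
      finrank ℝ V.direction = k + 1 →
      ((V : Set _) ∩ unitCube' d).Nonempty →
      ((K ×ˢ Set.Icc (0 : ℝ) 1) ∩ (V : Set _)).Nonempty) ∧
    IsNowhereDense (msum ℓ (K ×ˢ Set.Icc (0 : ℝ) 1)) := by
  refine ⟨hcpt.prod isCompact_Icc, ?_, ?_, ?_⟩
  · rintro ⟨x, t⟩ ⟨hx, ht⟩
    exact ⟨hsub hx, ht⟩
  · -- hitting affine subspaces
    intro V hVbot hVdim ⟨p, hpV, hpcube⟩
    set c : ℝ := p.2 with hc
    -- the set of directions v with (v, 0) ∈ V.direction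
    set D₀ : Submodule ℝ (EuclideanSpace ℝ (Fin d)) :=
      Submodule.comap (LinearMap.inl ℝ _ ℝ) V.direction with hD₀
    -- finrank D₀ ≥ k
    have hD₀rank : k ≤ finrank ℝ D₀ := by
      set f : V.direction →ₗ[ℝ] ℝ := (LinearMap.snd ℝ _ ℝ).comp V.direction.subtype with hf
      have hrn : finrank ℝ (LinearMap.range f) + finrank ℝ (LinearMap.ker f)
          = finrank ℝ V.direction := LinearMap.finrank_range_add_finrank_ker f
      have hr1 : finrank ℝ (LinearMap.range f) ≤ 1 := by
        simpa using Submodule.finrank_le (LinearMap.range f)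
      have hker : k ≤ finrank ℝ (LinearMap.ker f) := by omega
      -- inject ker f into D₀
      have hker0 : ∀ x : LinearMap.ker f, (x.1.1 : EuclideanSpace ℝ (Fin d) × ℝ).2 = 0 := by
        intro x
        exact x.2
      have : finrank ℝ (LinearMap.ker f) ≤ finrank ℝ D₀ := by
        let g0 : LinearMap.ker f →ₗ[ℝ] EuclideanSpace ℝ (Fin d) :=
          (LinearMap.fst ℝ _ ℝ).comp (V.direction.subtype.comp (LinearMap.ker f).subtype)
        have hg0mem : ∀ x, g0 x ∈ D₀ := by
          intro x
          simp only [hD₀, Submodule.mem_comap, LinearMap.inl_apply]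
          have : ((g0 x : EuclideanSpace ℝ (Fin d)), (0 : ℝ))
              = (x.1.1 : EuclideanSpace ℝ (Fin d) × ℝ) := Prod.ext rfl (hker0 x).symm
          rw [this]
          exact x.1.2
        let g : LinearMap.ker f →ₗ[ℝ] D₀ := g0.codRestrict D₀ hg0mem
        have hginj : Function.Injective g := by
          intro x y hxy
          have h1 : (x.1.1 : EuclideanSpace ℝ (Fin d) × ℝ).1 = (y.1.1 : EuclideanSpace ℝ (Fin d) × ℝ).1 :=
            congrArg Subtype.val hxy
          have h2 : (x.1.1 : EuclideanSpace ℝ (Fin d) × ℝ).2 = (y.1.1 : EuclideanSpace ℝ (Fin d) × ℝ).2 := by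
            rw [hker0 x, hker0 y]
          ext1; ext1
          exact Prod.ext h1 h2
        exact LinearMap.finrank_le_finrank_of_injective hginj
      omega
    -- choose a k-dimensional subspace of D₀
    obtain ⟨b, hb_li⟩ := exists_linearIndependent_of_le_finrank (R := ℝ) (M := D₀)
      (n := k) hD₀rank
    set b' : Fin k → EuclideanSpace ℝ (Fin d) := fun i => (b i : EuclideanSpace ℝ (Fin d))
      with hb'
    have hb'_li : LinearIndependent ℝ b' := hb_li.map' D₀.subtype (Submodule.ker_subtype D₀)
    set D' : Submodule ℝ (EuclideanSpace ℝ (Fin d)) := Submodule.span ℝ (Set.range b')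
      with hD'
    have hD'rank : finrank ℝ D' = k := by
      rw [hD', finrank_span_eq_card hb'_li, Fintype.card_fin]
    have hD'le : D' ≤ D₀ := by
      rw [hD', Submodule.span_le]
      rintro _ ⟨i, rfl⟩
      exact (b i).2
    -- the affine subspace through p.1 with direction D'
    set W : AffineSubspace ℝ (EuclideanSpace ℝ (Fin d)) := AffineSubspace.mk' p.1 D' with hW
    have hp1W : p.1 ∈ W := AffineSubspace.self_mem_mk' _ _
    have hWbot : W ≠ ⊥ := by
      intro h
      rw [h] at hp1W
      exact hp1W
    have hWdim : finrank ℝ W.direction = k := by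
      rw [hW, AffineSubspace.direction_mk', hD'rank]
    have hWhit : ((W : Set _) ∩ unitCube d).Nonempty := ⟨p.1, hp1W, hpcube.1⟩
    obtain ⟨q, hqK, hqW⟩ := hhit W hWbot hWdim hWhit
    refine ⟨(q, c), ⟨hqK, hpcube.2⟩, ?_⟩
    -- (q, c) ∈ V
    have hdiff : q -ᵥ p.1 ∈ D' := by
      rw [hW] at hqW
      exact (AffineSubspace.mem_mk').1 hqW
    have hdirV : ((q -ᵥ p.1 : EuclideanSpace ℝ (Fin d)), (0 : ℝ)) ∈ V.direction := by
      have := hD'le hdiff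
      simpa [hD₀, Submodule.mem_comap] using this
    have : ((q -ᵥ p.1 : EuclideanSpace ℝ (Fin d)), (0 : ℝ)) +ᵥ p ∈ V :=
      AffineSubspace.vadd_mem_of_mem_direction hdirV hpV
    have hpt : ((q -ᵥ p.1 : EuclideanSpace ℝ (Fin d)), (0 : ℝ)) +ᵥ p = (q, c) := by
      rw [Prod.ext_iff]
      constructor
      · show (q -ᵥ p.1) + p.1 = q
        simp [vsub_eq_sub]
      · show (0 : ℝ) + p.2 = c
        simp [hc]
    rwa [hpt] at this
  · -- nowhere dense
    rw [msum_prod]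
    unfold IsNowhereDense at hnwd ⊢
    rw [closure_prod_eq, interior_prod_eq, hnwd, Set.empty_prod]
end

section
/- Let 0 ≤ k < d and let K ⊆ [0,1]^d intersect every k-dimensional affine subspace of ℝ^d that meets [0,1]^d. Then every (d−k−1)-dimensional face of the cube [0,1]^d is contained in K, provided K is closed. In particular, for each point z of the face {(z_1,…,z_{d-k-1},0,…,0) : z_i ∈ [0,1]}, there is a k-dimensional affine subspace V with V ∩ [0,1]^d = {z}, namely V = {x ∈ ℝ^d : x_i = z_i for 1 ≤ i ≤ d−k−1, and x_{d-k} + ⋯ + x_d = 0}. -/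
/-!
A point `z` of a face `{x ∈ [0,1]^d : xᵢ = εᵢ for i ∈ F}` with `|F| = k + 1` is cut out of the
cube by a `k`-dimensional affine subspace through it: fix the coordinates outside `F` and impose
`∑_{i ∈ F} σᵢ (xᵢ - zᵢ) = 0`, where `σᵢ = 1 - 2 zᵢ = ±1` points from the face into the cube.
On the cube every summand is nonnegative, so all of them vanish and `x = z`. Since `K` meets this
subspace inside the cube, `z ∈ K`.
-/

open Set Module

section

variable {ι : Type*}

lemma eq_of_forall_notMem_of_signed_sum_eq_zero {F : Finset ι} {x z : EuclideanSpace ℝ ι}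
    (hx : ∀ i ∈ F, x i ∈ Icc (0 : ℝ) 1) (hz : ∀ i ∈ F, z i = 0 ∨ z i = 1)
    (hout : ∀ i ∉ F, x i = z i) (hsum : ∑ i ∈ F, (1 - 2 * z i) * (x i - z i) = 0) :
    x = z := by
  have hterm : ∀ i ∈ F, 0 ≤ (1 - 2 * z i) * (x i - z i) := by
    intro i hi
    rcases hz i hi with h | h <;> rw [h] <;> linarith [(hx i hi).1, (hx i hi).2]
  ext i
  by_cases hi : i ∈ F
  · have h := (Finset.sum_eq_zero_iff_of_nonneg hterm).mp hsum i hi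
    rcases hz i hi with hzi | hzi <;> rw [hzi] at h ⊢ <;> linarith
  · exact hout i hi

noncomputable def faceNormalMap (F : Finset ι) (σ : ι → ℝ) :
    EuclideanSpace ℝ ι →ₗ[ℝ] ({i // i ∉ F} → ℝ) × ℝ :=
  (LinearMap.pi fun j : {i // i ∉ F} => (EuclideanSpace.proj (𝕜 := ℝ) (j : ι)).toLinearMap).prod
    (∑ i ∈ F, σ i • (EuclideanSpace.proj (𝕜 := ℝ) i).toLinearMap)

@[simp]
lemma faceNormalMap_apply (F : Finset ι) (σ : ι → ℝ) (v : EuclideanSpace ℝ ι) :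
    faceNormalMap F σ v = (fun j : {i // i ∉ F} => v j, ∑ i ∈ F, σ i * v i) :=
  Prod.ext rfl (by simp [faceNormalMap])

lemma faceNormalMap_surjective [DecidableEq ι] {F : Finset ι} {σ : ι → ℝ} {i₀ : ι}
    (hi₀ : i₀ ∈ F) (hσ : σ i₀ ≠ 0) : Function.Surjective (faceNormalMap F σ) := by
  rintro ⟨y, t⟩
  refine ⟨WithLp.toLp 2 fun j => if h : j ∈ F then (if j = i₀ then t / σ i₀ else 0)
    else y ⟨j, h⟩, ?_⟩
  rw [faceNormalMap_apply, Finset.sum_eq_single_of_mem i₀ hi₀]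
  · ext j
    · simp [j.2]
    · simp [hi₀, mul_div_cancel₀ t hσ]
  · intro i hi hne
    simp [hi, hne]

lemma finrank_ker_faceNormalMap [Fintype ι] [DecidableEq ι] {F : Finset ι} {σ : ι → ℝ}
    {i₀ : ι} (hi₀ : i₀ ∈ F) (hσ : σ i₀ ≠ 0) :
    finrank ℝ (LinearMap.ker (faceNormalMap F σ)) = F.card - 1 := by
  have h := LinearMap.finrank_range_add_finrank_ker (faceNormalMap F σ)
  rw [LinearMap.range_eq_top.mpr (faceNormalMap_surjective hi₀ hσ), finrank_top,
    finrank_euclideanSpace, finrank_prod, finrank_pi, Fintype.card_subtype_compl,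
    Fintype.card_coe, finrank_self] at h
  have := F.card_le_univ
  have := Finset.card_pos.mpr ⟨i₀, hi₀⟩
  omega

noncomputable def faceTransversal (F : Finset ι) (z : EuclideanSpace ℝ ι) :
    AffineSubspace ℝ (EuclideanSpace ℝ ι) :=
  AffineSubspace.mk' z (LinearMap.ker (faceNormalMap F fun i => 1 - 2 * z i))

lemma mem_faceTransversal {F : Finset ι} {x z : EuclideanSpace ℝ ι} :
    x ∈ faceTransversal F z ↔
      (∀ i ∉ F, x i = z i) ∧ ∑ i ∈ F, (1 - 2 * z i) * (x i - z i) = 0 := by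
  simp [faceTransversal, AffineSubspace.mem_mk', funext_iff, sub_eq_zero]

lemma finrank_direction_faceTransversal [Fintype ι] [DecidableEq ι] {F : Finset ι}
    {z : EuclideanSpace ℝ ι} (hz : ∀ i ∈ F, z i = 0 ∨ z i = 1) (hF : F.Nonempty) :
    finrank ℝ (faceTransversal F z).direction = F.card - 1 := by
  obtain ⟨i₀, hi₀⟩ := hF
  rw [faceTransversal, AffineSubspace.direction_mk']
  refine finrank_ker_faceNormalMap hi₀ ?_
  rcases hz i₀ hi₀ with h | h <;> norm_num [h]

end

lemma setOf_sum_eq_zero_inter_unitCube_eq_singleton {d : ℕ} {S : Finset (Fin d)}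
    {z : EuclideanSpace ℝ (Fin d)} (hz : z ∈ unitCube d) (hzS : ∀ i ∈ S, z i = 0) :
    {x : EuclideanSpace ℝ (Fin d) | (∀ i ∉ S, x i = z i) ∧ ∑ i ∈ S, x i = 0} ∩ unitCube d =
      {z} := by
  ext x
  simp only [mem_inter_iff, mem_ofPred_eq, mem_singleton_iff]
  constructor
  · rintro ⟨⟨hout, hsum⟩, hx⟩
    refine eq_of_forall_notMem_of_signed_sum_eq_zero (fun i _ => hx i)
      (fun i hi => .inl (hzS i hi)) hout ?_
    rw [← hsum]
    exact Finset.sum_congr rfl fun i hi => by simp [hzS i hi]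
  · rintro rfl
    exact ⟨⟨fun _ _ => rfl, Finset.sum_eq_zero hzS⟩, hz⟩

theorem faces_subset_of_hits_general (d k : ℕ)
    (K : Set (EuclideanSpace ℝ (Fin d))) (hsub : K ⊆ unitCube d)
    (hhit : ∀ V : AffineSubspace ℝ (EuclideanSpace ℝ (Fin d)), V ≠ ⊥ →
      finrank ℝ V.direction = k →
      ((V : Set _) ∩ unitCube d).Nonempty → (K ∩ (V : Set _)).Nonempty) :
    (∀ (F : Finset (Fin d)) (ε : Fin d → ℝ), F.card = k + 1 →
      (∀ i ∈ F, ε i = 0 ∨ ε i = 1) →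
      {x : EuclideanSpace ℝ (Fin d) | x ∈ unitCube d ∧ ∀ i ∈ F, x i = ε i} ⊆ K) ∧
    (∀ z : EuclideanSpace ℝ (Fin d), z ∈ unitCube d →
      (∀ i : Fin d, d - k - 1 ≤ (i : ℕ) → z i = 0) →
      {x : EuclideanSpace ℝ (Fin d) |
          (∀ i : Fin d, (i : ℕ) < d - k - 1 → x i = z i) ∧
          ∑ i ∈ Finset.univ.filter (fun i : Fin d => d - k - 1 ≤ (i : ℕ)), x i = 0} ∩
        unitCube d = {z}) := by
  refine ⟨fun F ε hF hε z ⟨hz, hzF⟩ => ?_, fun z hz hz0 => ?_⟩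
  · have hvertex : ∀ i ∈ F, z i = 0 ∨ z i = 1 := fun i hi => hzF i hi ▸ hε i hi
    have hzV : z ∈ faceTransversal F z := AffineSubspace.self_mem_mk' _ _
    obtain ⟨y, hyK, hyV⟩ := hhit (faceTransversal F z)
      ((AffineSubspace.nonempty_iff_ne_bot _).mp ⟨z, hzV⟩)
      (by rw [finrank_direction_faceTransversal hvertex (Finset.card_pos.mp (by omega)), hF,
        Nat.add_sub_cancel])
      ⟨z, hzV, hz⟩
    obtain ⟨hout, hsum⟩ := mem_faceTransversal.mp hyV
    rwa [eq_of_forall_notMem_of_signed_sum_eq_zero (fun i _ => hsub hyK i) hvertex hout hsum]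
      at hyK
  · convert setOf_sum_eq_zero_inter_unitCube_eq_singleton hz (S := Finset.univ.filter _)
      fun i hi => hz0 i (Finset.mem_filter.mp hi).2 using 5
    simp only [Finset.mem_filter, Finset.mem_univ, true_and, not_le]

/-- If a closed `K ⊆ [0,1]^d` intersects every `k`-dimensional affine subspace
meeting `[0,1]^d`, then every `(d-k-1)`-dimensional face of `[0,1]^d` is contained
in `K`; and for each point `z` of the distinguished face (last `k+1` coordinates
zero), the affine subspace `V = {x : xᵢ = zᵢ for i < d-k-1, ∑_{i ≥ d-k-1} xᵢ = 0}`
meets `[0,1]^d` exactly in `{z}`. -/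
theorem faces_subset_of_hits (d k : ℕ) (hk : k < d)
    (K : Set (EuclideanSpace ℝ (Fin d))) (hcl : IsClosed K) (hsub : K ⊆ unitCube d)
    (hhit : ∀ V : AffineSubspace ℝ (EuclideanSpace ℝ (Fin d)), V ≠ ⊥ →
      finrank ℝ V.direction = k →
      ((V : Set _) ∩ unitCube d).Nonempty → (K ∩ (V : Set _)).Nonempty) :
    (∀ (F : Finset (Fin d)) (ε : Fin d → ℝ), F.card = k + 1 →
      (∀ i ∈ F, ε i = 0 ∨ ε i = 1) →
      {x : EuclideanSpace ℝ (Fin d) | x ∈ unitCube d ∧ ∀ i ∈ F, x i = ε i} ⊆ K) ∧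
    (∀ z : EuclideanSpace ℝ (Fin d), z ∈ unitCube d →
      (∀ i : Fin d, d - k - 1 ≤ (i : ℕ) → z i = 0) →
      {x : EuclideanSpace ℝ (Fin d) |
          (∀ i : Fin d, (i : ℕ) < d - k - 1 → x i = z i) ∧
          ∑ i ∈ Finset.univ.filter (fun i : Fin d => d - k - 1 ≤ (i : ℕ)), x i = 0} ∩
        unitCube d = {z}) :=
  faces_subset_of_hits_general d k K hsub hhit
end

section
/- Suppose 2 ≤ ℓ, 0 ≤ k < d, d ≥ 2, and suppose K ⊆ [0,1]^d is a compact set intersecting every k-dimensional affine subspace of ℝ^d that meets [0,1]^d, such that the ℓ-fold sumset ℓK is nowhere dense in ℝ^d. Then k > ((ℓ−1)/ℓ)·(d−1). -/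
/-!
Assume `ℓ k ≤ (ℓ - 1)(d - 1)`, i.e. `k ≤ (ℓ - 1) q` with `q = d - 1 - k`.

If `x` is a point of the cube with `k + 1` zero coordinates `i₀, …, i_k`, the `k`-plane through
`x` with directions `e_{i_r} - e_{i₀}` meets the cube only at `x`: on it the coordinates
`i₀, …, i_k` sum to `0`, and in the cube they are nonnegative. Hence `K` contains every point of
the cube with at most `q` nonzero coordinates, and `(ℓ - 1) K` contains the face
`[0,1]^k × {0}`.

The coordinate `k`-planes show that `K` projects onto the cube in the last `d - k` coordinates.
Cutting `K` into the finitely many pieces on which every coordinate stays in `[0, 1/2]` or in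
`[1/2, 1]`, Baire's theorem gives a piece whose cylinder over its projection has interior. Over
that open set the translates `p + [0,1]^k × {0}` of the points `p` of the piece all contain a
common box, so `ℓ K ⊇ K + [0,1]^k × {0}` has interior.
-/

open Set Module

open scoped Pointwise

section

open Finset

local notation "ℝ^" n => EuclideanSpace ℝ (Fin n)

variable {d k : ℕ}

def HitsAffineSubspaces (k : ℕ) (K : Set (ℝ^d)) : Prop :=
  ∀ V : AffineSubspace ℝ (ℝ^d), V ≠ ⊥ → finrank ℝ V.direction = k →
    ((V : Set (ℝ^d)) ∩ unitCube d).Nonempty → (K ∩ (V : Set (ℝ^d))).Nonempty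

def tailProj (k : ℕ) : (ℝ^d) →ₗ[ℝ] ℝ^d where
  toFun x := WithLp.toLp 2 fun j => if k ≤ (j : ℕ) then x j else 0
  map_add' x y := by ext j; by_cases h : k ≤ (j : ℕ) <;> simp [h]
  map_smul' c x := by ext j; by_cases h : k ≤ (j : ℕ) <;> simp [h]

@[simp]
lemma tailProj_apply (x : ℝ^d) (j : Fin d) :
    tailProj k x j = if k ≤ (j : ℕ) then x j else 0 := rfl

lemma tailProj_tailProj (x : ℝ^d) : tailProj k (tailProj k x) = tailProj k x := by
  ext j; by_cases h : k ≤ (j : ℕ) <;> simp [h]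

lemma tailProj_eq_zero_iff {z : ℝ^d} :
    tailProj k z = 0 ↔ ∀ j : Fin d, k ≤ (j : ℕ) → z j = 0 := by
  refine ⟨fun h j hj => by simpa [hj] using congrArg (· j) h, fun h => ?_⟩
  ext j
  by_cases hj : k ≤ (j : ℕ) <;> simp [hj, h]

variable {K : Set (ℝ^d)}

lemma HitsAffineSubspaces.exists_sub_mem_span (hK : HitsAffineSubspaces k K) {x : ℝ^d}
    (hx : x ∈ unitCube d) {v : Fin k → ℝ^d} (hv : LinearIndependent ℝ v) :
    ∃ p ∈ K, p - x ∈ Submodule.span ℝ (range v) := by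
  let V := AffineSubspace.mk' x (Submodule.span ℝ (range v))
  have hxV : x ∈ V := AffineSubspace.self_mem_mk' _ _
  obtain ⟨p, hpK, hpV⟩ := hK V (AffineSubspace.nonempty_iff_ne_bot _ |>.1 ⟨x, hxV⟩)
    (by rw [AffineSubspace.direction_mk', finrank_span_eq_card hv, Fintype.card_fin])
    ⟨x, hxV, hx⟩
  exact ⟨p, hpK, AffineSubspace.mem_mk'.1 hpV⟩

lemma HitsAffineSubspaces.exists_tailProj_eq (hk : k ≤ d) (hK : HitsAffineSubspaces k K)
    {y : ℝ^d} (hy : y ∈ unitCube d) : ∃ p ∈ K, tailProj k p = tailProj k y := by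
  let v (r : Fin k) : ℝ^d := EuclideanSpace.single (Fin.castLE hk r) 1
  have hv : LinearIndependent ℝ v := by
    simpa [v, Function.comp_def] using
      (EuclideanSpace.basisFun (Fin d) ℝ).toBasis.linearIndependent.comp _
        (Fin.castLE_injective hk)
  obtain ⟨p, hpK, hp⟩ := hK.exists_sub_mem_span hy hv
  have hker : Submodule.span ℝ (range v) ≤ LinearMap.ker (tailProj k) :=
    Submodule.span_le.2 <| range_subset_iff.2 fun r => by
      rw [SetLike.mem_coe, LinearMap.mem_ker, tailProj_eq_zero_iff]
      intro j hj
      have : j ≠ Fin.castLE hk r := fun h => by simp [h] at hj; omega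
      simp [v, this]
  exact ⟨p, hpK, by simpa [sub_eq_zero] using hker hp⟩

noncomputable def simplexEdge (ι : Fin (k + 1) → Fin d) (r : Fin k) : ℝ^d :=
  EuclideanSpace.single (ι r.succ) 1 - EuclideanSpace.single (ι 0) 1

lemma linearIndependent_simplexEdge {ι : Fin (k + 1) → Fin d} (hι : Function.Injective ι) :
    LinearIndependent ℝ (simplexEdge ι) := by
  refine Fintype.linearIndependent_iff.2 fun g hg i => ?_
  simpa [simplexEdge, hι.eq_iff, Fin.succ_ne_zero, Pi.single_apply] using
    congrArg (· (ι i.succ)) hg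

lemma eq_zero_of_mem_span_simplexEdge {ι : Fin (k + 1) → Fin d} (hι : Function.Injective ι)
    {w : ℝ^d} (hw : w ∈ Submodule.span ℝ (range (simplexEdge ι)))
    (hnonneg : ∀ r, 0 ≤ w (ι r)) :
    w = 0 := by
  have hspan : ∀ v ∈ Submodule.span ℝ (range (simplexEdge ι)),
      (∀ j ∉ range ι, v j = 0) ∧ ∑ r, v (ι r) = 0 := by
    intro v hv
    induction hv using Submodule.span_induction with
    | mem _ h =>
      obtain ⟨r, rfl⟩ := h
      refine ⟨fun j hj => ?_, ?_⟩
      · have h₁ : j ≠ ι r.succ := fun h => hj ⟨_, h.symm⟩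
        have h₂ : j ≠ ι 0 := fun h => hj ⟨_, h.symm⟩
        simp [simplexEdge, h₁, h₂]
      · simp [simplexEdge, hι.eq_iff, sum_sub_distrib]
    | zero => simp
    | add _ _ _ _ h₁ h₂ =>
      exact ⟨fun j hj => by simp [h₁.1 j hj, h₂.1 j hj],
        by simp [sum_add_distrib, h₁.2, h₂.2]⟩
    | smul c _ _ h => exact ⟨fun j hj => by simp [h.1 j hj], by simp [← mul_sum, h.2]⟩
  obtain ⟨hoff, hsum⟩ := hspan w hw
  have hon : ∀ r, w (ι r) = 0 := by
    simpa using (sum_eq_zero_iff_of_nonneg fun r _ => hnonneg r).1 hsum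
  ext j
  by_cases hj : j ∈ range ι
  · obtain ⟨r, rfl⟩ := hj
    simpa using hon r
  · simpa using hoff j hj

lemma HitsAffineSubspaces.mem_of_lt_card_zero (hK : HitsAffineSubspaces k K)
    (hsub : K ⊆ unitCube d) {x : ℝ^d} (hx : x ∈ unitCube d) (hzero : k < #{j | x j = 0}) :
    x ∈ K := by
  obtain ⟨T, hT, hTcard⟩ := exists_subset_card_eq hzero
  let ι := T.orderEmbOfFin hTcard
  have hxι (r : Fin (k + 1)) : x (ι r) = 0 := (mem_filter.1 (hT (T.orderEmbOfFin_mem hTcard r))).2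
  obtain ⟨p, hpK, hp⟩ := hK.exists_sub_mem_span hx (linearIndependent_simplexEdge ι.injective)
  have : p - x = 0 := eq_zero_of_mem_span_simplexEdge ι.injective hp fun r => by
    simpa [hxι] using (hsub hpK (ι r)).1
  rwa [← sub_eq_zero.1 this]

lemma card_filter_div_eq_le {n : ℕ} (s : Finset (Fin n)) {q : ℕ} (hq : 0 < q) (i : ℕ) :
    #{j ∈ s | j.val / q = i} ≤ q := by
  calc #{j ∈ s | j.val / q = i} ≤ #(range q) := by
        refine card_le_card_of_injOn (fun j => (j : ℕ) % q)
          (fun j _ => by simpa using Nat.mod_lt _ hq) fun j₁ h₁ j₂ h₂ h => ?_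
        simp only [coe_filter, Set.mem_ofPred_eq] at h₁ h₂
        exact Fin.ext (Nat.ext_div_mod (h₁.2.trans h₂.2.symm) h)
    _ = q := card_range q

lemma exists_sum_eq_of_tailProj_eq_zero {L q : ℕ} (hkq : k ≤ L * q) {z : ℝ^d}
    (hz : tailProj k z = 0) :
    ∃ g : Fin L → ℝ^d, ∑ i, g i = z ∧
      ∀ i, #{j | g i j ≠ 0} ≤ q ∧ ∀ j, g i j = z j ∨ g i j = 0 := by
  rw [tailProj_eq_zero_iff] at hz
  refine ⟨fun i => WithLp.toLp 2 fun j => if (j : ℕ) / q = i then z j else 0, ?_,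
    fun i => ⟨?_, ?_⟩⟩
  · ext j
    by_cases hj : k ≤ (j : ℕ)
    · simp [hz j hj]
    · have hjq : (j : ℕ) / q < L := Nat.div_lt_of_lt_mul (by linarith)
      simp only [WithLp.ofLp_sum, Finset.sum_apply]
      rw [sum_eq_single (⟨_, hjq⟩ : Fin L) (fun i _ hi => if_neg fun h => hi (Fin.ext h.symm))
        (by simp), if_pos rfl]
  · obtain rfl | hq := q.eq_zero_or_pos
    · obtain rfl : k = 0 := by simpa using hkq
      simp [hz]
    · refine (card_le_card fun j hj => ?_).trans (card_filter_div_eq_le univ hq i)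
      by_cases h : (j : ℕ) / q = i <;> simp_all
  · intro j; by_cases h : (j : ℕ) / q = i <;> simp [h]

def unitCubeFace (k : ℕ) : Set (ℝ^d) :=
  {z | z ∈ unitCube d ∧ tailProj k z = 0}

lemma HitsAffineSubspaces.unitCubeFace_subset_msum (hk : k < d) (hK : HitsAffineSubspaces k K)
    (hsub : K ⊆ unitCube d) {L : ℕ} (hkq : k ≤ L * (d - 1 - k)) :
    unitCubeFace k ⊆ msum L K := by
  rintro z ⟨hz, hπz⟩
  obtain ⟨g, hsum, hg⟩ := exists_sum_eq_of_tailProj_eq_zero hkq hπz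
  refine ⟨g, fun i => hK.mem_of_lt_card_zero hsub (fun j => ?_) ?_, hsum⟩
  · rcases (hg i).2 j with h | h <;> rw [h]
    exacts [hz j, ⟨le_rfl, zero_le_one⟩]
  · have hcard := card_filter_add_card_filter_not (s := univ) fun j => g i j = 0
    have hnonzero := (hg i).1
    simp only [card_univ, Fintype.card_fin, ← ne_eq] at hcard
    omega

def halfBox (s : Fin d → Fin 2) : Set (ℝ^d) :=
  {p | ∀ j, p j ∈ Icc ((s j : ℝ) / 2) ((s j : ℝ) / 2 + 1 / 2)}

lemma isClosed_halfBox (s : Fin d → Fin 2) : IsClosed (halfBox s) := by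
  simp only [halfBox, ofPred_forall]
  exact isClosed_iInter fun j => isClosed_Icc.preimage (by fun_prop)

lemma exists_mem_halfBox {p : ℝ^d} (hp : p ∈ unitCube d) : ∃ s, p ∈ halfBox s := by
  refine ⟨fun j => if p j ≤ 1 / 2 then 0 else 1, fun j => ?_⟩
  have := hp j
  dsimp only
  split_ifs with h
  · simp_all
  · simp only [Set.mem_Icc] at this
    norm_num
    constructor <;> linarith

lemma ball_subset_unitCube :
    Metric.ball (WithLp.toLp 2 fun _ => 1 / 2 : ℝ^d) (1 / 2) ⊆ unitCube d := by
  intro x hx j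
  have := (PiLp.dist_apply_le x _ j).trans_lt hx
  simp only [Real.dist_eq, abs_lt] at this
  constructor <;> linarith

lemma exists_interior_preimage_image_halfBox_nonempty (hK : IsCompact K) (hsub : K ⊆ unitCube d)
    (hfib : ∀ y ∈ unitCube d, ∃ p ∈ K, tailProj k p = tailProj k y) :
    ∃ s, (interior (tailProj k ⁻¹' (tailProj k '' (K ∩ halfBox s)))).Nonempty := by
  let F s := tailProj k ⁻¹' (tailProj k '' (K ∩ halfBox s))
  have hπ : Continuous (tailProj k : (ℝ^d) → ℝ^d) :=
    LinearMap.continuous_of_finiteDimensional _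
  have hcover : unitCube d ⊆ ⋃ s, F s := fun y hy => by
    obtain ⟨p, hpK, hp⟩ := hfib y hy
    obtain ⟨s, hs⟩ := exists_mem_halfBox (hsub hpK)
    exact mem_iUnion.2 ⟨s, p, ⟨hpK, hs⟩, hp⟩
  obtain ⟨s, hs⟩ : ∃ s, ¬ IsMeagre (F s) := by
    by_contra! h
    exact not_isMeagre_of_isOpen Metric.isOpen_ball (Metric.nonempty_ball.2 (by norm_num))
      ((isMeagre_iUnion h).mono (ball_subset_unitCube.trans hcover))
  have hF : IsClosed (F s) :=
    ((hK.inter_right (isClosed_halfBox s)).image hπ).isClosed.preimage hπ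
  refine ⟨s, nonempty_iff_ne_empty.2 fun h => hs ?_⟩
  exact (hF.isNowhereDense_iff.2 h).isMeagre

lemma interior_add_unitCubeFace_nonempty (hK : IsCompact K) (hsub : K ⊆ unitCube d)
    (hfib : ∀ y ∈ unitCube d, ∃ p ∈ K, tailProj k p = tailProj k y) :
    (interior (K + unitCubeFace k)).Nonempty := by
  obtain ⟨s, x₀, hx₀⟩ := exists_interior_preimage_image_halfBox_nonempty hK hsub hfib
  -- `τ x` has the first `k` coordinates of `x₀` and the last `d - k` coordinates of `x`
  let τ (x : ℝ^d) : ℝ^d := x₀ + tailProj k (x - x₀)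
  have hτ : Continuous τ :=
    continuous_const.add ((LinearMap.continuous_of_finiteDimensional _).comp
      (continuous_id.sub continuous_const))
  let c : ℝ^d :=
    WithLp.toLp 2 fun j => if k ≤ (j : ℕ) then x₀ j else (s j : ℝ) / 2 + 3 / 4
  have hτc : τ c = x₀ := by
    have : tailProj k (c - x₀) = 0 := tailProj_eq_zero_iff.2 fun j hj => by simp [c, hj]
    simp only [τ, this, add_zero]
  have hO : τ ⁻¹' interior (tailProj k ⁻¹' (tailProj k '' (K ∩ halfBox s))) ∩
      Metric.ball c (1 / 4) ⊆ K + unitCubeFace k := by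
    rintro x ⟨hxF, hxc⟩
    obtain ⟨p, ⟨hpK, hps⟩, hp⟩ := interior_subset hxF
    have hπ : tailProj k (x - p) = 0 := by
      rw [map_sub, hp]
      simp [τ, tailProj_tailProj]
    refine ⟨p, hpK, x - p, ⟨fun j => ?_, hπ⟩, add_sub_cancel _ _⟩
    by_cases hj : k ≤ (j : ℕ)
    · rw [tailProj_eq_zero_iff.1 hπ j hj]
      exact ⟨le_rfl, zero_le_one⟩
    · have hxj := (PiLp.dist_apply_le x c j).trans_lt hxc
      have hpj := hps j
      simp only [c, hj, if_false, Real.dist_eq, abs_lt] at hxj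
      simp only [Set.mem_Icc] at hpj
      simp only [PiLp.sub_apply, Set.mem_Icc]
      constructor <;> linarith
  exact ⟨c, interior_maximal hO ((isOpen_interior.preimage hτ).inter Metric.isOpen_ball)
    ⟨by simpa [hτc] using hx₀, Metric.mem_ball_self (by norm_num)⟩⟩

end

lemma add_msum_subset {E : Type*} [AddCommMonoid E] (K : Set E) (L : ℕ) :
    K + msum L K ⊆ msum (L + 1) K := by
  rintro _ ⟨p, hp, _, ⟨f, hf, rfl⟩, rfl⟩
  exact ⟨Fin.cons p f, fun i => Fin.cases hp hf i, Fin.sum_cons _ _⟩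

theorem nonexistence_general (d k ℓ : ℕ) (hk : k < d) (hℓ : 2 ≤ ℓ)
    (K : Set (EuclideanSpace ℝ (Fin d))) (hcpt : IsCompact K) (hsub : K ⊆ unitCube d)
    (hhit : ∀ V : AffineSubspace ℝ (EuclideanSpace ℝ (Fin d)), V ≠ ⊥ →
      finrank ℝ V.direction = k →
      ((V : Set _) ∩ unitCube d).Nonempty → (K ∩ (V : Set _)).Nonempty)
    (hnwd : IsNowhereDense (msum ℓ K)) :
    ((ℓ : ℝ) - 1) / ℓ * ((d : ℝ) - 1) < k := by
  by_contra! hle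
  obtain ⟨L, rfl⟩ : ∃ L, ℓ = L + 1 := ⟨ℓ - 1, by omega⟩
  have hkq : k ≤ L * (d - 1 - k) := by
    have : ((L : ℝ) + 1) * k ≤ L * ((d : ℝ) - 1) := by
      push_cast at hle
      rw [add_sub_cancel_right, div_mul_eq_mul_div, le_div_iff₀ (by positivity)] at hle
      linarith
    rw [← Nat.cast_le (α := ℝ), Nat.cast_mul, Nat.sub_sub, Nat.cast_sub (by omega)]
    push_cast
    linarith
  have hface : K + unitCubeFace k ⊆ msum (L + 1) K :=
    (add_subset_add_left (HitsAffineSubspaces.unitCubeFace_subset_msum hk hhit hsub hkq)).trans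
      (add_msum_subset K L)
  obtain ⟨x, hx⟩ := interior_add_unitCubeFace_nonempty hcpt hsub
    fun y hy => HitsAffineSubspaces.exists_tailProj_eq hk.le hhit hy
  exact hnwd.subset (interior_mono (hface.trans subset_closure) hx)

/-- If an `(ℓ,k,d)`-set exists then `k > ((ℓ-1)/ℓ)·(d-1)`. -/
theorem nonexistence (d k ℓ : ℕ) (hd : 2 ≤ d) (hk : k < d) (hℓ : 2 ≤ ℓ)
    (K : Set (EuclideanSpace ℝ (Fin d))) (hcpt : IsCompact K) (hsub : K ⊆ unitCube d)
    (hhit : ∀ V : AffineSubspace ℝ (EuclideanSpace ℝ (Fin d)), V ≠ ⊥ →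
      finrank ℝ V.direction = k →
      ((V : Set _) ∩ unitCube d).Nonempty → (K ∩ (V : Set _)).Nonempty)
    (hnwd : IsNowhereDense (msum ℓ K)) :
    ((ℓ : ℝ) - 1) / ℓ * ((d : ℝ) - 1) < k :=
  nonexistence_general d k ℓ hk hℓ K hcpt hsub hhit hnwd
end

section
/- The set K_k([0,1]^d) of nonempty compact subsets of [0,1]^d that intersect every k-dimensional affine subspace meeting [0,1]^d is a closed subset of the space of nonempty compact subsets of [0,1]^d equipped with the Hausdorff metric. -/
open Set Module TopologicalSpace

abbrev Cube (d : ℕ) := {x : EuclideanSpace ℝ (Fin d) // x ∈ unitCube d}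

theorem isClosed_Kk_general (d k : ℕ) :
    IsClosed {K : NonemptyCompacts (Cube d) |
      ∀ V : AffineSubspace ℝ (EuclideanSpace ℝ (Fin d)), V ≠ ⊥ →
        finrank ℝ V.direction = k →
        ((V : Set (EuclideanSpace ℝ (Fin d))) ∩ unitCube d).Nonempty →
        ∃ p ∈ (K : Set (Cube d)), (p : EuclideanSpace ℝ (Fin d)) ∈ V} := by
  simp only [ofPred_forall]
  refine isClosed_iInter fun V => isClosed_iInter fun _ => isClosed_iInter fun _ =>
    isClosed_iInter fun _ => ?_
  -- The Hausdorff-metric topology on `NonemptyCompacts` is the Vietoris topology, in which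
  -- meeting a fixed closed set is a closed condition.
  exact NonemptyCompacts.isClosed_inter_nonempty_of_isClosed
    (V.closed_of_finiteDimensional.preimage continuous_subtype_val)

/-- `𝒦_k([0,1]^d)`: the nonempty compact subsets of `[0,1]^d` intersecting every
`k`-dimensional affine subspace that meets `[0,1]^d` form a closed subset of the
space of nonempty compact subsets of `[0,1]^d` with the Hausdorff metric. -/
theorem isClosed_Kk (d k : ℕ) (hd : 1 ≤ d) (hk : k < d) :
    IsClosed {K : NonemptyCompacts (Cube d) |
      ∀ V : AffineSubspace ℝ (EuclideanSpace ℝ (Fin d)), V ≠ ⊥ →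
        finrank ℝ V.direction = k →
        ((V : Set (EuclideanSpace ℝ (Fin d))) ∩ unitCube d).Nonempty →
        ∃ p ∈ (K : Set (Cube d)), (p : EuclideanSpace ℝ (Fin d)) ∈ V} :=
  isClosed_Kk_general d k
end

section
/- Let K_1 ⊆ [0,1]^2 be a finite union of grid squares [t_1/10,(t_1+1)/10] × [t_2/10,(t_2+1)/10] with (t_1,t_2) ranging over a finite set T ⊆ {0,…,9}^2, and suppose there exists v ∈ ℝ^2 such that v − K_1 is disjoint from K_1 + ℤ^2. Define K = ⋂_{i≥0} K_i where K_0 = [0,1]^2 and K_{i+1} = ⋃_{t∈T} (1/10)·(K_i + t). Then K + K is nowhere dense in ℝ^2. -/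
open Set Pointwise

/-!
Every point of `Kᵢ₊₁` is, after scaling by `10ⁱ`, a point of `K₁` plus a lattice point. Hence if
`10⁻ⁱ • (v + z)` with `z ∈ ℤ²` were a sum `a + b` of points of `K`, then `v - y = y' + z'` for some
`y, y' ∈ K₁` and `z' ∈ ℤ²`, contradicting the choice of `v`. These excluded points are dense,
and `K + K` is compact, so `K + K` is nowhere dense.
-/

/-- The unit square `[0,1]^2 ⊆ ℝ × ℝ`. -/
def unitSq : Set (ℝ × ℝ) := Set.Icc (0 : ℝ) 1 ×ˢ Set.Icc (0 : ℝ) 1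

/-- The integer lattice `ℤ² ⊆ ℝ × ℝ`. -/
def intLattice : Set (ℝ × ℝ) := {p | ∃ m n : ℤ, p = ((m : ℝ), (n : ℝ))}

/-- The contraction `x ↦ (1/10)·(x + t)` of the plane. -/
noncomputable def contr (t : ℤ × ℤ) (x : ℝ × ℝ) : ℝ × ℝ :=
  (10 : ℝ)⁻¹ • (x + ((t.1 : ℝ), (t.2 : ℝ)))

def intLatticeAddSubgroup : AddSubgroup (ℝ × ℝ) where
  carrier := intLattice
  add_mem' := by
    rintro _ _ ⟨m, n, rfl⟩ ⟨m', n', rfl⟩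
    exact ⟨m + m', n + n', by push_cast; rfl⟩
  zero_mem' := ⟨0, 0, by push_cast; rfl⟩
  neg_mem' := by
    rintro _ ⟨m, n, rfl⟩
    exact ⟨-m, -n, by push_cast; rfl⟩

theorem mem_intLatticeAddSubgroup {p : ℝ × ℝ} : p ∈ intLatticeAddSubgroup ↔ p ∈ intLattice :=
  Iff.rfl

theorem intCast_smul_mem_intLattice (k : ℤ) {p : ℝ × ℝ} (hp : p ∈ intLattice) :
    (k : ℝ) • p ∈ intLattice := by
  rw [Int.cast_smul_eq_zsmul]
  exact zsmul_mem (mem_intLatticeAddSubgroup.2 hp) k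

theorem exists_mem_intLattice_dist_lt_one (x : ℝ × ℝ) : ∃ z ∈ intLattice, dist x z < 1 := by
  refine ⟨((⌊x.1⌋ : ℝ), (⌊x.2⌋ : ℝ)), ⟨_, _, rfl⟩, ?_⟩
  rw [Prod.dist_eq, max_lt_iff, Real.dist_eq, Real.dist_eq,
    abs_of_nonneg (sub_nonneg.2 (Int.floor_le _)), abs_of_nonneg (sub_nonneg.2 (Int.floor_le _))]
  constructor <;> linarith [Int.lt_floor_add_one x.1, Int.lt_floor_add_one x.2]

theorem dense_iUnion_inv_pow_smul_vadd_intLattice {b : ℝ} (hb : 1 < b) (v : ℝ × ℝ) :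
    Dense (⋃ i : ℕ, (b ^ i)⁻¹ • (v +ᵥ intLattice)) := by
  refine Metric.dense_iff.2 fun p ε hε => ?_
  obtain ⟨i, hi⟩ : ∃ i : ℕ, ε⁻¹ < b ^ i := pow_unbounded_of_one_lt ε⁻¹ hb
  have hbi : 0 < b ^ i := pow_pos (zero_lt_one.trans hb) i
  obtain ⟨z, hz, hdist⟩ := exists_mem_intLattice_dist_lt_one (b ^ i • p - v)
  refine ⟨(b ^ i)⁻¹ • (v + z), ?_, mem_iUnion.2 ⟨i, smul_mem_smul_set ⟨z, hz, rfl⟩⟩⟩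
  have hp : p = (b ^ i)⁻¹ • (v + (b ^ i • p - v)) := by
    rw [add_sub_cancel, inv_smul_smul₀ hbi.ne']
  rw [Metric.mem_ball, hp, dist_smul₀, dist_add_left, Real.norm_of_nonneg (inv_pos.2 hbi).le,
    dist_comm]
  calc (b ^ i)⁻¹ * dist (b ^ i • p - v) z < (b ^ i)⁻¹ * 1 := by gcongr
    _ < ε := by rw [mul_one]; exact (inv_lt_comm₀ hbi hε).2 hi

theorem pow_succ_smul_contr (i : ℕ) (t : ℤ × ℤ) (z : ℝ × ℝ) :
    (10 : ℝ) ^ (i + 1) • contr t z =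
      (10 : ℝ) ^ i • z + ((10 ^ i : ℤ) : ℝ) • ((t.1 : ℝ), (t.2 : ℝ)) := by
  rw [contr, smul_smul, pow_succ, mul_assoc, mul_inv_cancel₀ (by norm_num : (10 : ℝ) ≠ 0),
    mul_one, smul_add]
  push_cast
  rfl

section Recursion

variable {T : Finset (ℤ × ℤ)} {Kseq : ℕ → Set (ℝ × ℝ)}
  (hsucc : ∀ i, Kseq (i + 1) = ⋃ t ∈ T, contr t '' Kseq i)
include hsucc

theorem isCompact_iInter_of_contr_recursion (h0 : IsCompact (Kseq 0)) :
    IsCompact (⋂ i, Kseq i) := by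
  have hcomp : ∀ i, IsCompact (Kseq i) := by
    intro i
    induction i with
    | zero => exact h0
    | succ i ih =>
      rw [hsucc]
      exact T.isCompact_biUnion fun t _ => ih.image (by unfold contr; fun_prop)
  exact h0.of_isClosed_subset (isClosed_iInter fun i => (hcomp i).isClosed) (iInter_subset Kseq 0)

theorem pow_smul_mem_add_intLattice (i : ℕ) {x : ℝ × ℝ} (hx : x ∈ Kseq (i + 1)) :
    (10 : ℝ) ^ i • x ∈ Kseq 1 + intLattice := by
  induction i generalizing x with
  | zero => exact ⟨x, hx, 0, zero_mem intLatticeAddSubgroup, by simp⟩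
  | succ i ih =>
    rw [hsucc] at hx
    simp only [mem_iUnion, mem_image] at hx
    obtain ⟨t, -, z, hz, rfl⟩ := hx
    obtain ⟨y, hy, l, hl, hyl⟩ := ih hz
    refine ⟨y, hy, l + ((10 ^ i : ℤ) : ℝ) • ((t.1 : ℝ), (t.2 : ℝ)), ?_, ?_⟩
    · exact add_mem (mem_intLatticeAddSubgroup.2 hl)
        (intCast_smul_mem_intLattice _ ⟨t.1, t.2, rfl⟩)
    · rw [pow_succ_smul_contr, ← hyl, add_assoc]

theorem disjoint_iUnion_inv_pow_smul_vadd_intLattice {v : ℝ × ℝ}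
    (hv : Disjoint ((fun x => v - x) '' Kseq 1) (Kseq 1 + intLattice)) :
    Disjoint (⋃ i : ℕ, ((10 : ℝ) ^ i)⁻¹ • (v +ᵥ intLattice))
      ((⋂ i, Kseq i) + (⋂ i, Kseq i)) := by
  refine disjoint_left.2 fun x hx hsum => ?_
  obtain ⟨i, z, ⟨w, hw, rfl⟩, rfl⟩ : ∃ i : ℕ, ∃ z ∈ v +ᵥ intLattice, ((10 : ℝ) ^ i)⁻¹ • z = x := by
    simpa only [mem_iUnion, mem_smul_set] using hx
  obtain ⟨a, ha, b, hb, hab⟩ := hsum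
  obtain ⟨y, hy, l, hl, hyl⟩ := pow_smul_mem_add_intLattice hsucc i (mem_iInter.1 ha (i + 1))
  obtain ⟨y', hy', l', hl', hyl'⟩ := pow_smul_mem_add_intLattice hsucc i (mem_iInter.1 hb (i + 1))
  have hvw : v + w = y + l + (y' + l') := by
    dsimp only at hyl hyl' hab
    rw [hyl, hyl', ← smul_add, hab, vadd_eq_add, smul_inv_smul₀ (by positivity)]
  refine disjoint_left.1 hv ⟨y, hy, rfl⟩ ⟨y', hy', l + l' - w, ?_, ?_⟩
  · exact sub_mem (add_mem (mem_intLatticeAddSubgroup.2 hl) (mem_intLatticeAddSubgroup.2 hl'))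
      (mem_intLatticeAddSubgroup.2 hw)
  · show y' + (l + l' - w) = v - y
    rw [eq_sub_of_add_eq hvw]
    abel

end Recursion

theorem sumset_nwd_of_separating_vector_general (T : Finset (ℤ × ℤ))
    (K₁ : Set (ℝ × ℝ)) (hK₁ : K₁ = ⋃ t ∈ T, contr t '' unitSq)
    (hv : ∃ v : ℝ × ℝ, Disjoint ((fun x => v - x) '' K₁) (K₁ + intLattice))
    (Kseq : ℕ → Set (ℝ × ℝ)) (h0 : Kseq 0 = unitSq)
    (hsucc : ∀ i, Kseq (i + 1) = ⋃ t ∈ T, contr t '' Kseq i) :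
    IsNowhereDense ((⋂ i, Kseq i) + (⋂ i, Kseq i)) := by
  obtain ⟨v, hv⟩ := hv
  rw [hK₁, ← h0, ← hsucc] at hv
  have hK : IsCompact (⋂ i, Kseq i) :=
    isCompact_iInter_of_contr_recursion hsucc (h0 ▸ isCompact_Icc.prod isCompact_Icc)
  rw [(hK.add hK).isClosed.isNowhereDense_iff, interior_eq_empty_iff_dense_compl]
  exact (dense_iUnion_inv_pow_smul_vadd_intLattice (by norm_num : (1 : ℝ) < 10) v).mono
    (disjoint_iUnion_inv_pow_smul_vadd_intLattice hsucc hv).subset_compl_right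

/-- If `K₁ = ⋃_{t ∈ T} (1/10)·([0,1]² + t)` (a union of grid squares,
`T ⊆ {0,…,9}²`) admits a vector `v` with `v - K₁` disjoint from `K₁ + ℤ²`,
then the set `K = ⋂ᵢ Kᵢ` of the associated recursion `K₀ = [0,1]²`,
`K_{i+1} = ⋃_{t ∈ T} (1/10)·(Kᵢ + t)` has `K + K` nowhere dense. -/
theorem sumset_nwd_of_separating_vector (T : Finset (ℤ × ℤ))
    (hT : ∀ t ∈ T, 0 ≤ t.1 ∧ t.1 ≤ 9 ∧ 0 ≤ t.2 ∧ t.2 ≤ 9)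
    (K₁ : Set (ℝ × ℝ)) (hK₁ : K₁ = ⋃ t ∈ T, contr t '' unitSq)
    (hv : ∃ v : ℝ × ℝ, Disjoint ((fun x => v - x) '' K₁) (K₁ + intLattice))
    (Kseq : ℕ → Set (ℝ × ℝ)) (h0 : Kseq 0 = unitSq)
    (hsucc : ∀ i, Kseq (i + 1) = ⋃ t ∈ T, contr t '' Kseq i) :
    IsNowhereDense ((⋂ i, Kseq i) + (⋂ i, Kseq i)) :=
  sumset_nwd_of_separating_vector_general T K₁ hK₁ hv Kseq h0 hsucc
end
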